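/- arXiv:2211.08382 — 9 statements merged into one kernel-verified Lean document; each statement's English description precedes it below -/
import Mathlib

section
/- Let c = (c_1,…,c_{2s}) be a composition of n into 2s positive parts (s ≥ 1) and let F̄(c) be the circular fence poset on {1,…,n}. Then for every k with 0 ≤ k ≤ n, the number of lower ideals of F̄(c) of cardinality k equals the number of lower ideals of cardinality n − k; i.e., the rank polynomial of every circular fence poset is symmetric. -/
/-!
Encode a lower ideal `I` by its indicator word on the cycle. The rank polynomial is then the trace
of a product of `2 × 2` transfer matrices, one for each step of the cycle. The up and the down
matrix are conjugated to their transposes by one and the same symmetric matrix `S` with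
`det S ≠ 0` (`M S = S Mᵀ`), so the trace does not change when the word of steps is read backwards.
Reading the cycle backwards and complementing, `I ↦ -Iᶜ`, turns the ideals of the reversed fence
into those of the original one and sizes `k` into `n - k`. Hence the rank polynomial is
palindromic.
-/

/-- The partial sum `σ_k = c_1 + … + c_k` of a composition `c` with `2s` parts. -/
def circSigma (s : ℕ) (c : Fin (2 * s) → ℕ) (k : ℕ) : ℕ :=
  ∑ i ∈ Finset.univ.filter (fun i : Fin (2 * s) => (i : ℕ) < k), c i

/-- The (0-indexed) position `p` carries an up step `x_{p+1} ≺ x_{p+2}` exactly when the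
(1-indexed) block `m` containing `p+1` is odd, i.e. when the number of `m ∈ {1,…,2s}` with
`σ_m ≤ p` is even. -/
def circUpStep (s : ℕ) (c : Fin (2 * s) → ℕ) (p : ℕ) : Prop :=
  (Finset.univ.filter (fun m : Fin (2 * s) => circSigma s c ((m : ℕ) + 1) ≤ p)).card % 2 = 0

instance (s : ℕ) (c : Fin (2 * s) → ℕ) (p : ℕ) : Decidable (circUpStep s c p) := by
  unfold circUpStep; infer_instance

/-- `I` is a lower ideal of the circular fence poset `F̄(c)`: it is closed under all
generating cover relations (indices taken cyclically). -/
def IsCircFenceIdeal (s n : ℕ) (c : Fin (2 * s) → ℕ) (I : Finset (Fin n)) : Prop :=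
  ∀ p q : Fin n, (q : ℕ) = ((p : ℕ) + 1) % n →
    (if circUpStep s c (p : ℕ) then (q ∈ I → p ∈ I) else (p ∈ I → q ∈ I))

open Polynomial Matrix Finset

namespace Matrix

variable {ι R : Type*} [Fintype ι] [DecidableEq ι] [CommRing R]

theorem list_prod_mul_eq_mul_transpose_prod_reverse {S : Matrix ι ι R}
    {L : List (Matrix ι ι R)} (hL : ∀ M ∈ L, M * S = S * Mᵀ) :
    L.prod * S = S * L.reverse.prodᵀ := by
  induction L with
  | nil => simp
  | cons M L ih =>
    rw [List.forall_mem_cons] at hL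
    rw [List.prod_cons, mul_assoc, ih hL.2, ← mul_assoc, hL.1, mul_assoc, ← transpose_mul]
    simp

theorem trace_eq_of_mul_eq_mul_transpose [IsDomain R] {A B S : Matrix ι ι R} (hS : S.det ≠ 0)
    (h : A * S = S * Bᵀ) : A.trace = B.trace := by
  refine mul_left_cancel₀ hS ?_
  calc S.det * A.trace = (A * S * S.adjugate).trace := by
        rw [mul_assoc, mul_adjugate, Matrix.mul_smul, mul_one, trace_smul, smul_eq_mul]
    _ = (Bᵀ * (S.adjugate * S)).trace := by
        rw [h, mul_assoc, trace_mul_comm, mul_assoc]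
    _ = S.det * B.trace := by
        rw [adjugate_mul, Matrix.mul_smul, mul_one, trace_smul, smul_eq_mul, trace_transpose]

theorem trace_list_prod_reverse [IsDomain R] {S : Matrix ι ι R} (hS : S.det ≠ 0)
    {L : List (Matrix ι ι R)} (hL : ∀ M ∈ L, M * S = S * Mᵀ) :
    L.reverse.prod.trace = L.prod.trace :=
  (trace_eq_of_mul_eq_mul_transpose hS (list_prod_mul_eq_mul_transpose_prod_reverse hL)).symm

theorem trace_list_ofFn_prod_mul {m : ℕ} (A : Fin m → Matrix ι ι R) (C : Matrix ι ι R) :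
    ((List.ofFn A).prod * C).trace =
      ∑ b : Fin (m + 1) → ι, (∏ t, A t (b t.castSucc) (b t.succ)) * C (b (Fin.last m)) (b 0) := by
  induction m generalizing C with
  | zero =>
    rw [← (Equiv.funUnique (Fin 1) ι).symm.sum_comp]
    simp [trace]
  | succ m ih =>
    rw [List.ofFn_succ', List.prod_concat, mul_assoc, ih,
      ← (Fin.snocEquiv fun _ : Fin (m + 2) => ι).sum_comp, Fintype.sum_prod_type, Finset.sum_comm]
    refine Finset.sum_congr rfl fun b _ => ?_
    simp only [mul_apply, Finset.mul_sum, Fin.snocEquiv_apply, Fin.prod_univ_castSucc]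
    refine Finset.sum_congr rfl fun x _ => ?_
    simp only [Fin.succ_castSucc, Fin.succ_last, Fin.snoc_castSucc, Fin.snoc_last,
      ← Fin.castSucc_zero, mul_assoc]

theorem trace_list_ofFn_prod {m : ℕ} (A : Fin (m + 1) → Matrix ι ι R) :
    (List.ofFn A).prod.trace = ∑ b : Fin (m + 1) → ι, ∏ t, A t (b t) (b (t + 1)) := by
  rw [List.ofFn_succ', List.prod_concat, trace_list_ofFn_prod_mul]
  refine Finset.sum_congr rfl fun b _ => ?_
  rw [Fin.prod_univ_castSucc]
  simp [Fin.coeSucc_eq_succ]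

end Matrix

theorem List.reverse_ofFn {α : Type*} {n : ℕ} (f : Fin n → α) :
    (List.ofFn f).reverse = List.ofFn fun i => f i.rev :=
  List.ext_getElem (by simp) fun i _ _ => by simp [Fin.rev, Nat.sub_sub, Nat.add_comm 1]

theorem Polynomial.reflect_sum {R α : Type*} [Semiring R] (N : ℕ) (s : Finset α) (f : α → R[X]) :
    (∑ i ∈ s, f i).reflect N = ∑ i ∈ s, (f i).reflect N :=
  map_sum (⟨⟨reflect N, reflect_zero⟩, fun f g => reflect_add f g N⟩ : R[X] →+ R[X]) f s

theorem Fin.rev_eq_neg_add_one {n : ℕ} [NeZero n] (t : Fin n) : t.rev = -(t + 1) := by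
  obtain ⟨m, rfl⟩ := Nat.exists_eq_succ_of_ne_zero (NeZero.ne n)
  rw [← Fin.last_sub, show Fin.last m = -1 from Fin.ext (Fin.coe_neg_one).symm]
  abel

open scoped Pointwise

noncomputable section CyclicFence

variable {n : ℕ} [NeZero n]

def IsCyclicFenceIdeal (up : Fin n → Bool) (I : Finset (Fin n)) : Prop :=
  ∀ t, if up t then (t + 1 ∈ I → t ∈ I) else (t ∈ I → t + 1 ∈ I)

instance (up : Fin n → Bool) : DecidablePred (IsCyclicFenceIdeal up) := fun _ => by
  unfold IsCyclicFenceIdeal; infer_instance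

def cyclicFenceRankPoly (up : Fin n → Bool) : ℤ[X] :=
  ∑ I ∈ univ.filter (IsCyclicFenceIdeal up), X ^ #I

/-- Row (column) index `1` records that position `t` (`t + 1`) lies in the ideal; entering a
position of the ideal contributes a factor `X`. -/
def transferMatrix (up : Bool) : Matrix (Fin 2) (Fin 2) ℤ[X] :=
  if up then !![1, 0; 1, X] else !![1, X; 0, X]

def transferSymmetrizer : Matrix (Fin 2) (Fin 2) ℤ[X] :=
  !![X - X ^ 2, X; X, X - 1]

theorem transferMatrix_mul_transferSymmetrizer (up : Bool) :
    transferMatrix up * transferSymmetrizer = transferSymmetrizer * (transferMatrix up)ᵀ := by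
  cases up <;> refine Matrix.ext fun i j => ?_ <;> fin_cases i <;> fin_cases j <;>
    simp [transferMatrix, transferSymmetrizer, mul_apply] <;> ring

theorem det_transferSymmetrizer_ne_zero : transferSymmetrizer.det ≠ 0 := by
  intro h
  simpa [transferSymmetrizer, det_fin_two_of] using congrArg (eval 1) h

theorem transferMatrix_apply_ite (up : Bool) (p q : Prop) [Decidable p] [Decidable q] :
    transferMatrix up (if p then 1 else 0) (if q then 1 else 0) =
      if (if up then (q → p) else (p → q)) then X ^ (if q then 1 else 0) else 0 := by
  cases up <;> by_cases p <;> by_cases q <;> simp [transferMatrix, *]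

theorem cyclicFenceRankPoly_eq_trace (up : Fin n → Bool) :
    cyclicFenceRankPoly up = (List.ofFn fun t => transferMatrix (up t)).prod.trace := by
  obtain ⟨m, rfl⟩ := Nat.exists_eq_succ_of_ne_zero (NeZero.ne n)
  have hbij : Function.Bijective
      fun (I : Finset (Fin (m + 1))) t => if t ∈ I then (1 : Fin 2) else 0 := by
    refine Function.bijective_iff_has_inverse.mpr
      ⟨fun b => univ.filter (b · = 1), fun I => by ext; simp, fun b => funext fun t => ?_⟩
    simp only [mem_filter, mem_univ, true_and]
    generalize b t = x
    revert x; decide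
  rw [trace_list_ofFn_prod, cyclicFenceRankPoly, Finset.sum_filter]
  refine Fintype.sum_bijective _ hbij _ _ fun I => ?_
  simp only [transferMatrix_apply_ite, Finset.prod_ite_zero, Finset.prod_pow_eq_pow_sum]
  have hshift : ∑ t, (if t + 1 ∈ I then 1 else 0) = #I := by
    refine (Equiv.sum_comp (Equiv.addRight 1) fun t => if t ∈ I then 1 else 0).trans ?_
    simp
  simp [IsCyclicFenceIdeal, hshift]

theorem cyclicFenceRankPoly_comp_rev (up : Fin n → Bool) :
    cyclicFenceRankPoly (up ∘ Fin.rev) = cyclicFenceRankPoly up := by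
  have h := trace_list_prod_reverse det_transferSymmetrizer_ne_zero
    (L := List.ofFn fun t => transferMatrix (up t))
    (by simp [transferMatrix_mul_transferSymmetrizer])
  rw [List.reverse_ofFn] at h
  rwa [cyclicFenceRankPoly_eq_trace, cyclicFenceRankPoly_eq_trace]

theorem isCyclicFenceIdeal_comp_rev_neg_compl_iff (up : Fin n → Bool) (I : Finset (Fin n)) :
    IsCyclicFenceIdeal (up ∘ Fin.rev) (-Iᶜ) ↔ IsCyclicFenceIdeal up I := by
  refine Fin.revPerm.forall_congr fun t => ?_
  have h1 : -t = t.rev + 1 := by rw [Fin.rev_eq_neg_add_one]; abel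
  have h2 : -(t + 1) = t.rev := (Fin.rev_eq_neg_add_one t).symm
  cases up t.rev <;> simp [h1, h2, not_imp_not]

theorem reflect_cyclicFenceRankPoly_eq_comp_rev (up : Fin n → Bool) :
    (cyclicFenceRankPoly up).reflect n = cyclicFenceRankPoly (up ∘ Fin.rev) := by
  have hinv : Function.Involutive fun I : Finset (Fin n) => -Iᶜ := fun I =>
    Finset.ext fun t => by simp
  rw [cyclicFenceRankPoly, cyclicFenceRankPoly, reflect_sum]
  refine Finset.sum_equiv hinv.toPerm (fun I => ?_) fun I _ => ?_
  · simp [isCyclicFenceIdeal_comp_rev_neg_compl_iff]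
  · rw [reflect_monomial, revAt_le (by simpa using card_le_univ I)]
    simp [Finset.card_neg, Finset.card_compl]

theorem reflect_cyclicFenceRankPoly_eq_self (up : Fin n → Bool) :
    (cyclicFenceRankPoly up).reflect n = cyclicFenceRankPoly up :=
  (reflect_cyclicFenceRankPoly_eq_comp_rev up).trans (cyclicFenceRankPoly_comp_rev up)

theorem coeff_cyclicFenceRankPoly (up : Fin n → Bool) (k : ℕ) :
    (cyclicFenceRankPoly up).coeff k = #{I | IsCyclicFenceIdeal up I ∧ #I = k} := by
  simp [cyclicFenceRankPoly, coeff_X_pow, Finset.sum_boole, filter_filter, eq_comm]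

theorem card_cyclicFenceIdeals_eq_card_sub (up : Fin n → Bool) {k : ℕ} (hk : k ≤ n) :
    #{I | IsCyclicFenceIdeal up I ∧ #I = k} = #{I | IsCyclicFenceIdeal up I ∧ #I = n - k} := by
  apply Nat.cast_injective (R := ℤ)
  rw [← coeff_cyclicFenceRankPoly, ← coeff_cyclicFenceRankPoly, ← revAt_le hk, ← coeff_reflect,
    reflect_cyclicFenceRankPoly_eq_self]

end CyclicFence

theorem isCircFenceIdeal_iff {s n : ℕ} [NeZero n] (c : Fin (2 * s) → ℕ) (I : Finset (Fin n)) :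
    IsCircFenceIdeal s n c I ↔ IsCyclicFenceIdeal (fun t => decide (circUpStep s c t)) I := by
  have hsucc (p q : Fin n) : (q : ℕ) = ((p : ℕ) + 1) % n ↔ q = p + 1 := by
    rw [Fin.ext_iff, Fin.val_add, Fin.val_one', Nat.add_mod_mod]
  simp only [IsCircFenceIdeal, IsCyclicFenceIdeal, hsucc, forall_eq, decide_eq_true_eq]

theorem circular_fence_rank_symmetric_general
    (s n : ℕ) (c : Fin (2 * s) → ℕ) (k : ℕ) (hk : k ≤ n) :
    {I : Finset (Fin n) | IsCircFenceIdeal s n c I ∧ I.card = k}.ncard =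
    {I : Finset (Fin n) | IsCircFenceIdeal s n c I ∧ I.card = n - k}.ncard := by
  rcases Nat.eq_zero_or_pos n with rfl | hn
  · obtain rfl := Nat.le_zero.mp hk
    rfl
  have : NeZero n := ⟨hn.ne'⟩
  have ncard_eq (j : ℕ) : {I : Finset (Fin n) | IsCircFenceIdeal s n c I ∧ I.card = j}.ncard =
      #{I : Finset (Fin n) |
        IsCyclicFenceIdeal (fun t => decide (circUpStep s c t)) I ∧ #I = j} := by
    rw [← Set.ncard_coe_finset]
    simp [isCircFenceIdeal_iff]
  rw [ncard_eq, ncard_eq, card_cyclicFenceIdeals_eq_card_sub _ hk]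

/-- the rank polynomial of every circular fence poset is symmetric:
the number of lower ideals of cardinality `k` equals the number of lower ideals of
cardinality `n - k`. -/
theorem circular_fence_rank_symmetric
    (s n : ℕ) (hs : 1 ≤ s) (c : Fin (2 * s) → ℕ) (hc : ∀ m, 1 ≤ c m)
    (hn : n = ∑ m, c m) (k : ℕ) (hk : k ≤ n) :
    {I : Finset (Fin n) | IsCircFenceIdeal s n c I ∧ I.card = k}.ncard =
    {I : Finset (Fin n) | IsCircFenceIdeal s n c I ∧ I.card = n - k}.ncard :=
  circular_fence_rank_symmetric_general s n c k hk
end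

section
/- Call a polynomial p ∈ ℤ[q] d-palindromic (d ∈ ℕ) if natDegree(p) ≤ d and p.coeff(j) = p.coeff(d − j) for all 0 ≤ j ≤ d. Let B and X be 2×2 matrices over ℤ[q] and let m, c ∈ ℕ. Suppose trace(B) is m-palindromic, det(B) is 2m-palindromic, trace(X) is c-palindromic, and trace(B·X) is (c+m)-palindromic. Then for every k ∈ ℕ, trace(B^k · X) is (c + k·m)-palindromic. -/
open Polynomial

/-- A polynomial `p ∈ ℤ[q]` is `d`-palindromic (symmetric with center `d/2`) if its
`natDegree` is at most `d` and `coeff j = coeff (d - j)` for all `0 ≤ j ≤ d`. -/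
def IsPalindromic (p : Polynomial ℤ) (d : ℕ) : Prop :=
  p.natDegree ≤ d ∧ ∀ j ≤ d, p.coeff j = p.coeff (d - j)

/-!
By Cayley–Hamilton, `B² = (tr B) B - (det B) 1`, so `t k = tr (Bᵏ X)` satisfies the linear
recurrence `t (k + 2) = tr B * t (k + 1) - det B * t k`. Being `d`-palindromic means
`reflect d p = p` plus a degree bound, so degrees `d` add under products and differences of
`d`-palindromic polynomials stay `d`-palindromic. Both terms of the recurrence are
`(c + (k + 2) m)`-palindromic, and two-step induction concludes.
-/

theorem isPalindromic_iff_reflect (p : ℤ[X]) (d : ℕ) :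
    IsPalindromic p d ↔ p.natDegree ≤ d ∧ reflect d p = p := by
  refine and_congr_right fun _ => ⟨fun h => ?_, fun h j hj => ?_⟩
  · ext i
    rcases le_or_gt i d with hi | hi
    · rw [coeff_reflect, revAt_le hi, ← h i hi]
    · rw [coeff_reflect, revAt_eq_self_of_lt hi]
  · nth_rw 1 [← h]
    rw [coeff_reflect, revAt_le hj]

namespace IsPalindromic

variable {p q : ℤ[X]} {d e : ℕ}

theorem mul (hp : IsPalindromic p d) (hq : IsPalindromic q e) :
    IsPalindromic (p * q) (d + e) := by
  rw [isPalindromic_iff_reflect] at *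
  exact ⟨natDegree_mul_le.trans (add_le_add hp.1 hq.1),
    by rw [reflect_mul p q hp.1 hq.1, hp.2, hq.2]⟩

theorem sub (hp : IsPalindromic p d) (hq : IsPalindromic q d) :
    IsPalindromic (p - q) d := by
  rw [isPalindromic_iff_reflect] at *
  exact ⟨(natDegree_sub_le _ _).trans (max_le hp.1 hq.1), by rw [reflect_sub, hp.2, hq.2]⟩

end IsPalindromic

namespace Matrix

variable {R : Type*} [CommRing R]

theorem sq_eq_trace_smul_sub_det_smul (B : Matrix (Fin 2) (Fin 2) R) :
    B ^ 2 = B.trace • B - B.det • (1 : Matrix (Fin 2) (Fin 2) R) := by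
  ext i j
  fin_cases i <;> fin_cases j <;>
    simp [sq, mul_apply, trace_fin_two, det_fin_two] <;> ring

theorem trace_pow_add_two_mul (B X : Matrix (Fin 2) (Fin 2) R) (k : ℕ) :
    (B ^ (k + 2) * X).trace =
      B.trace * (B ^ (k + 1) * X).trace - B.det * (B ^ k * X).trace := by
  have hpow : B ^ (k + 2) = B.trace • B ^ (k + 1) - B.det • B ^ k := by
    rw [add_comm k 2, pow_add, sq_eq_trace_smul_sub_det_smul, sub_mul, smul_mul_assoc,
      smul_mul_assoc, one_mul, ← pow_succ']
  rw [hpow, sub_mul, smul_mul_assoc, smul_mul_assoc, trace_sub, trace_smul, trace_smul,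
    smul_eq_mul, smul_eq_mul]

end Matrix

/-- if `tr B` is `m`-palindromic, `det B` is `2m`-palindromic, `tr X` is
`c`-palindromic and `tr (B·X)` is `(c+m)`-palindromic, then `tr (Bᵏ·X)` is
`(c + k·m)`-palindromic for every `k`. -/
theorem trace_pow_mul_palindromic
    (B X : Matrix (Fin 2) (Fin 2) (Polynomial ℤ)) (m c : ℕ)
    (hB : IsPalindromic B.trace m)
    (hdet : IsPalindromic B.det (2 * m))
    (hX : IsPalindromic X.trace c)
    (hBX : IsPalindromic (B * X).trace (c + m)) :
    ∀ k : ℕ, IsPalindromic ((B ^ k * X).trace) (c + k * m) := by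
  refine Nat.twoStepInduction (by simpa using hX) (by simpa using hBX) fun k hk hk1 => ?_
  rw [Matrix.trace_pow_add_two_mul]
  have h1 := hB.mul hk1
  have h2 := hdet.mul hk
  rw [show m + (c + (k + 1) * m) = c + (k + 2) * m by ring] at h1
  rw [show 2 * m + (c + k * m) = c + (k + 2) * m by ring] at h2
  exact h1.sub h2
end

section
/- Fix integers a, b ≥ 1 and let M₁₁, M₂₂ ∈ ℤ[q] be the rank-matrix entries of the box poset Fin a × Fin b defined combinatorially below. Then the polynomial M₁₁ + M₂₂ (the trace of the rank matrix of B_{a×b}) is (a·b)-palindromic: its natDegree is at most ab and its coefficient of q^j equals its coefficient of q^{ab−j} for all 0 ≤ j ≤ ab. -/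
open Polynomial

/-- The lower sets of the box poset `Fin a × Fin b` with the componentwise order. -/
def boxLowerSets (a b : ℕ) : Finset (Finset (Fin a × Fin b)) :=
  Finset.univ.filter (fun I =>
    ∀ p ∈ I, ∀ p' : Fin a × Fin b, p'.1 ≤ p.1 → p'.2 ≤ p.2 → p' ∈ I)

/-- Partial rank polynomial of the box poset: `∑ q^|I|` over lower sets `I`
satisfying the constraint `P`. -/
noncomputable def boxEntry (a b : ℕ) (P : Finset (Fin a × Fin b) → Prop)
    [DecidablePred P] : Polynomial ℤ :=
  ∑ I ∈ (boxLowerSets a b).filter P, X ^ I.card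

/-- 180°-rotation of the box. -/
def boxRev (a b : ℕ) (p : Fin a × Fin b) : Fin a × Fin b :=
  (⟨a - 1 - p.1, by have := p.1.isLt; omega⟩,
   ⟨b - 1 - p.2, by have := p.2.isLt; omega⟩)

lemma boxRev_invol (a b : ℕ) : Function.Involutive (boxRev a b) := by
  intro p
  have h1 := p.1.isLt; have h2 := p.2.isLt
  simp only [boxRev, Prod.ext_iff, Fin.ext_iff]
  omega

/-- Complement-rotate map on subsets of the box. -/
def boxRho (a b : ℕ) (I : Finset (Fin a × Fin b)) : Finset (Fin a × Fin b) :=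
  Finset.image (boxRev a b) Iᶜ

lemma mem_boxRho (a b : ℕ) (I : Finset (Fin a × Fin b)) (p : Fin a × Fin b) :
    p ∈ boxRho a b I ↔ boxRev a b p ∉ I := by
  simp only [boxRho, Finset.mem_image, Finset.mem_compl]
  constructor
  · rintro ⟨q, hq, rfl⟩; rwa [boxRev_invol a b q]
  · intro h; exact ⟨boxRev a b p, h, boxRev_invol a b p⟩

lemma boxRho_invol (a b : ℕ) : Function.Involutive (boxRho a b) := by
  intro I
  ext p
  rw [mem_boxRho, mem_boxRho, boxRev_invol a b, not_not]

lemma boxRho_card (a b : ℕ) (I : Finset (Fin a × Fin b)) :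
    (boxRho a b I).card = a * b - I.card := by
  rw [boxRho, Finset.card_image_of_injective _ (boxRev_invol a b).injective,
    Finset.card_compl]
  simp

lemma boxRho_lower (a b : ℕ) (I : Finset (Fin a × Fin b)) (hI : I ∈ boxLowerSets a b) :
    boxRho a b I ∈ boxLowerSets a b := by
  simp only [boxLowerSets, Finset.mem_filter, Finset.mem_univ, true_and] at hI ⊢
  intro p hp p' h1 h2
  rw [mem_boxRho] at hp ⊢
  intro hc
  apply hp
  refine hI _ hc _ ?_ ?_
  · have h1' := Fin.le_def.mp h1
    exact Fin.le_def.mpr (show a - 1 - (p.1 : ℕ) ≤ a - 1 - (p'.1 : ℕ) by omega)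
  · have h2' := Fin.le_def.mp h2
    exact Fin.le_def.mpr (show b - 1 - (p.2 : ℕ) ≤ b - 1 - (p'.2 : ℕ) by omega)

/-- the trace `M₁₁ + M₂₂` of the rank matrix of the box poset `B_{a×b}`
is `(a·b)`-palindromic. -/
theorem box_trace_palindromic
    (a b : ℕ) (ha : 1 ≤ a) (hb : 1 ≤ b)
    (xL xR : Fin a × Fin b)
    (hxL : xL = (⟨a - 1, by omega⟩, ⟨0, by omega⟩))
    (hxR : xR = (⟨0, by omega⟩, ⟨b - 1, by omega⟩)) :
    IsPalindromic
      (boxEntry a b (fun I => xR ∈ I) +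
       boxEntry a b (fun I => xR ∉ I ∧ xL ∉ I))
      (a * b) := by
  classical
  have hRL : boxRev a b xR = xL := by
    subst hxL hxR
    simp only [boxRev, Prod.ext_iff, Fin.ext_iff]
    omega
  have hLR : boxRev a b xL = xR := by
    rw [← hRL, boxRev_invol]
  -- combine the two sums into one over a union
  set C : Finset (Fin a × Fin b) → Prop := fun I => xR ∈ I ∨ (xR ∉ I ∧ xL ∉ I) with hC
  set T : Finset (Finset (Fin a × Fin b)) := (boxLowerSets a b).filter C with hT
  have hsplit : boxEntry a b (fun I => xR ∈ I) +
      boxEntry a b (fun I => xR ∉ I ∧ xL ∉ I) = ∑ I ∈ T, (X : Polynomial ℤ) ^ I.card := by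
    unfold boxEntry
    rw [← Finset.sum_union]
    · apply Finset.sum_congr _ (fun _ _ => rfl)
      ext I
      simp only [Finset.mem_union, Finset.mem_filter, hT, hC]
      tauto
    · rw [Finset.disjoint_left]
      intro I hI hI'
      simp only [Finset.mem_filter] at hI hI'
      exact hI'.2.1 hI.2
  have hcardle : ∀ I : Finset (Fin a × Fin b), I.card ≤ a * b := by
    intro I
    have := Finset.card_le_univ I
    simpa using this
  -- rho preserves the condition
  have hcond : ∀ I, C I → C (boxRho a b I) := by
    intro I h
    simp only [hC, mem_boxRho, hRL, hLR] at h ⊢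
    tauto
  have hmemT : ∀ I ∈ T, boxRho a b I ∈ T := by
    intro I hI
    simp only [hT, Finset.mem_filter] at hI ⊢
    exact ⟨boxRho_lower a b I hI.1, hcond I hI.2⟩
  -- coefficients count lower sets of a given size
  have hcoeff : ∀ j, (∑ I ∈ T, (X : Polynomial ℤ) ^ I.card).coeff j =
      ((T.filter (fun I => j = I.card)).card : ℤ) := by
    intro j
    rw [finset_sum_coeff]
    simp only [coeff_X_pow]
    rw [Finset.sum_boole]
  constructor
  · rw [hsplit]
    apply Polynomial.natDegree_sum_le_of_forall_le
    intro I hI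
    rw [natDegree_X_pow]
    exact hcardle I
  · intro j hj
    rw [hsplit, hcoeff, hcoeff]
    congr 1
    apply Finset.card_bij (fun I _ => boxRho a b I)
    · intro I hI
      simp only [Finset.mem_filter] at hI ⊢
      obtain ⟨hIT, hIc⟩ := hI
      refine ⟨hmemT I hIT, ?_⟩
      rw [boxRho_card]
      omega
    · intro I _ I' _ h
      exact (boxRho_invol a b).injective h
    · intro J hJ
      simp only [Finset.mem_filter] at hJ
      obtain ⟨hJT, hJc⟩ := hJ
      refine ⟨boxRho a b J, ?_, boxRho_invol a b J⟩
      simp only [Finset.mem_filter]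
      refine ⟨hmemT J hJT, ?_⟩
      rw [boxRho_card]
      omega
end

section
/- Let s ≥ 1, let a : Fin s → ℤ with a i ≥ 1 for all i, and let l be a non-negative integer with 2l ≤ a i for all i. Then every extreme point of the chainlink polytope CL(ā,l) ⊆ ℝ^s has all coordinates in ℤ. -/
/-!
Suppose the extreme point `v` has a nonintegral coordinate, and move all nonintegral coordinates
of `v` by the same amount `±t`. For small `t` no coordinate crosses an integer, and every
constraint of `CL(ā,l)` survives: the bounds are integers, a difference of two shifted or of two
fixed coordinates does not change, and a difference constraint between an integral and a
nonintegral coordinate is an integral bound on the latter. So `v` is the midpoint of two distinct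
points of the polytope.
-/

/-- The chainlink polytope `CL(ā,l) ⊆ ℝ^s` (indices taken cyclically). -/
def chainlink (s : ℕ) [NeZero s] (a : Fin s → ℝ) (l : ℝ) : Set (Fin s → ℝ) :=
  {x | (∀ i, 0 ≤ x i ∧ x i ≤ a i) ∧ ∀ i, x i - x (i + 1) ≤ a i - l}

open Filter Topology

theorem Set.eq_zero_of_add_mem_of_sub_mem_of_mem_extremePoints {𝕜 E : Type*} [Field 𝕜]
    [LinearOrder 𝕜] [IsStrictOrderedRing 𝕜] [AddCommGroup E] [Module 𝕜 E] {A : Set E} {x y : E}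
    (hx : x ∈ A.extremePoints 𝕜) (hadd : x + y ∈ A) (hsub : x - y ∈ A) : y = 0 :=
  add_eq_left.1 (hx.2 hadd hsub (mem_openSegment_add_sub x y))

theorem Filter.Eventually.exists_ne_zero_and_neg {G : Type*} [TopologicalSpace G] [AddGroup G]
    [IsTopologicalAddGroup G] [(𝓝[≠] (0 : G)).NeBot] {P : G → Prop} (h : ∀ᶠ t in 𝓝 0, P t) :
    ∃ t ≠ 0, P t ∧ P (-t) := by
  have hneg : ∀ᶠ t in 𝓝 (0 : G), P (-t) := by
    have hlim : Tendsto (fun t : G => -t) (𝓝 0) (𝓝 0) := by simpa using tendsto_neg (0 : G)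
    exact hlim.eventually h
  obtain ⟨t, ⟨hpos, hneg⟩, ht⟩ :=
    ((h.and hneg).filter_mono nhdsWithin_le_nhds |>.and self_mem_nhdsWithin).exists (f := 𝓝[≠] 0)
  exact ⟨t, ht, hpos, hneg⟩

theorem Int.floor_eq_and_ceil_eq_of_mem_Ioo {α : Type*} [Ring α] [LinearOrder α]
    [IsStrictOrderedRing α] [FloorRing α] {n : ℤ} {x : α} (hx : x ∈ Set.Ioo (n : α) (n + 1)) :
    ⌊x⌋ = n ∧ ⌈x⌉ = n + 1 :=
  ⟨Int.floor_eq_iff.2 ⟨hx.1.le, hx.2⟩,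
    Int.ceil_eq_iff.2 ⟨by simpa using hx.1, by push_cast; exact hx.2.le⟩⟩

theorem Int.eventually_floor_add_eq_and_ceil_add_eq {x : ℝ} (hx : Int.fract x ≠ 0) :
    ∀ᶠ t in 𝓝 (0 : ℝ), ⌊x + t⌋ = ⌊x⌋ ∧ ⌈x + t⌉ = ⌈x⌉ := by
  have hxI : x ∈ Set.Ioo (⌊x⌋ : ℝ) (⌊x⌋ + 1) :=
    ⟨(Int.floor_le x).lt_of_ne' (Int.fract_pos.1 ((Int.fract_nonneg x).lt_of_ne' hx)),
      Int.lt_floor_add_one x⟩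
  have hlim : Tendsto (fun t : ℝ => x + t) (𝓝 0) (𝓝 x) := by
    simpa using (continuous_const_add x).tendsto 0
  filter_upwards [hlim.eventually (Ioo_mem_nhds hxI.1 hxI.2)] with t ht
  rw [(Int.floor_eq_and_ceil_eq_of_mem_Ioo ht).1, (Int.floor_eq_and_ceil_eq_of_mem_Ioo ht).2,
    (Int.floor_eq_and_ceil_eq_of_mem_Ioo hxI).2]
  exact ⟨rfl, rfl⟩

section NonintIndicator

variable {ι : Type*}

noncomputable def nonintIndicator (v : ι → ℝ) : ι → ℝ :=
  fun i => if Int.fract (v i) = 0 then 0 else 1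

theorem eventually_floor_ceil_add_smul_nonintIndicator [Finite ι] (v : ι → ℝ) :
    ∀ᶠ t in 𝓝 (0 : ℝ), ∀ i, ⌊(v + t • nonintIndicator v) i⌋ = ⌊v i⌋ ∧
      ⌈(v + t • nonintIndicator v) i⌉ = ⌈v i⌉ := by
  refine eventually_all.2 fun i => ?_
  by_cases hi : Int.fract (v i) = 0
  · simp [nonintIndicator, hi]
  · simpa [nonintIndicator, hi] using Int.eventually_floor_add_eq_and_ceil_add_eq hi

theorem add_smul_nonintIndicator_sub_le {v : ι → ℝ} {t : ℝ}
    (ht : ∀ k, ⌊(v + t • nonintIndicator v) k⌋ = ⌊v k⌋ ∧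
      ⌈(v + t • nonintIndicator v) k⌉ = ⌈v k⌉)
    {i j : ι} {K : ℤ} (h : v i - v j ≤ K) :
    (v + t • nonintIndicator v) i - (v + t • nonintIndicator v) j ≤ K := by
  have hfi := ht i
  have hfj := ht j
  simp only [Pi.add_apply, Pi.smul_apply, smul_eq_mul, nonintIndicator] at hfi hfj ⊢
  have int_eq_floor : ∀ k, Int.fract (v k) = 0 → v k = ⌊v k⌋ := fun k hk => by
    linarith [Int.self_sub_floor (v k)]
  split_ifs at hfi hfj ⊢ with hi hj hj
  · simp [h]
  · have key : ((⌊v i⌋ - K : ℤ) : ℝ) ≤ v j := by push_cast; linarith [int_eq_floor i hi]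
    rw [← Int.le_floor, ← hfj.1, Int.le_floor] at key
    push_cast at key
    linarith [int_eq_floor i hi]
  · have key : v i ≤ ((K + ⌊v j⌋ : ℤ) : ℝ) := by push_cast; linarith [int_eq_floor j hj]
    rw [← Int.ceil_le, ← hfi.2, Int.ceil_le] at key
    push_cast at key
    linarith [int_eq_floor j hj]
  · linarith

end NonintIndicator

theorem eventually_add_smul_nonintIndicator_mem_chainlink {s : ℕ} [NeZero s] {a : Fin s → ℤ}
    {l : ℤ} {v : Fin s → ℝ} (hv : v ∈ chainlink s (fun i => (a i : ℝ)) l) :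
    ∀ᶠ t in 𝓝 (0 : ℝ), v + t • nonintIndicator v ∈ chainlink s (fun i => (a i : ℝ)) l := by
  filter_upwards [eventually_floor_ceil_add_smul_nonintIndicator v] with t ht
  refine ⟨fun i => ⟨?_, ?_⟩, fun i => ?_⟩
  · exact Int.floor_nonneg.1 ((ht i).1 ▸ Int.floor_nonneg.2 (hv.1 i).1)
  · exact Int.ceil_le.1 ((ht i).2 ▸ Int.ceil_le.2 (hv.1 i).2)
  · have hdiff := add_smul_nonintIndicator_sub_le ht (K := a i - l) (by push_cast; exact hv.2 i)
    push_cast at hdiff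
    exact hdiff

theorem chainlink_extremePoints_integral_general
    (s : ℕ) [NeZero s] (a : Fin s → ℤ)
    (l : ℤ)
    (v : Fin s → ℝ)
    (hv : v ∈ Set.extremePoints ℝ (chainlink s (fun i => (a i : ℝ)) (l : ℝ))) :
    ∀ i, ∃ m : ℤ, v i = (m : ℝ) := by
  intro i
  by_contra hi
  have hfract : Int.fract (v i) ≠ 0 := fun h =>
    hi (by obtain ⟨m, hm⟩ := Int.fract_eq_zero_iff.1 h; exact ⟨m, hm.symm⟩)
  obtain ⟨t, ht, hadd, hsub⟩ :=
    (eventually_add_smul_nonintIndicator_mem_chainlink hv.1).exists_ne_zero_and_neg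
  rw [neg_smul, ← sub_eq_add_neg] at hsub
  have hzero := congrFun (Set.eq_zero_of_add_mem_of_sub_mem_of_mem_extremePoints hv hadd hsub) i
  simp [nonintIndicator, hfract, ht] at hzero

/-- every extreme point (vertex) of the chainlink polytope is integral
when `2l ≤ aᵢ` for all `i`. -/
theorem chainlink_extremePoints_integral
    (s : ℕ) [NeZero s] (a : Fin s → ℤ) (ha : ∀ i, 1 ≤ a i)
    (l : ℤ) (hl : 0 ≤ l) (h2l : ∀ i, 2 * l ≤ a i)
    (v : Fin s → ℝ)
    (hv : v ∈ Set.extremePoints ℝ (chainlink s (fun i => (a i : ℝ)) (l : ℝ))) :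
    ∀ i, ∃ m : ℤ, v i = (m : ℝ) :=
  chainlink_extremePoints_integral_general s a l v hv
end

section
/- Let s ≥ 1, let a : Fin s → ℤ with a i ≥ 1 for all i, let l be a non-negative integer with 2l ≤ a i for all i, and let t be an integer. Then every extreme point v of the section CL^t(ā,l) = CL(ā,l) ∩ {x ∈ ℝ^s : x_1 + … + x_s = t} is half-integral: 2·v_i ∈ ℤ for every coordinate i. -/
open Classical

set_option linter.unusedSectionVars false

section CLaux

variable {s : ℕ} [NeZero s] (a : Fin s → ℤ) (l : ℤ) (v : Fin s → ℝ)

/-- tight edge predicate -/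
def CLE (i : Fin s) : Prop := v i - v (i + 1) = (a i : ℝ) - l

/-- strictly between bounds -/
def CLFlex (i : Fin s) : Prop := 0 < v i ∧ v i < a i

/-- singleton flexible component at `j` -/
def CLP1 (j : Fin s) : Prop := CLFlex a v j ∧ ¬ CLE a l v (j - 1) ∧ ¬ CLE a l v j

/-- pair flexible component `{j, j+1}` -/
def CLP2 (j : Fin s) : Prop :=
  CLFlex a v j ∧ CLFlex a v (j + 1) ∧ CLE a l v j ∧ ¬ CLE a l v (j - 1) ∧ ¬ CLE a l v (j + 1)

def CLPC (j : Fin s) (b : Bool) : Prop := if b then CLP2 a l v j else CLP1 a l v j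

/-- membership in the component `(j, b)` -/
def CLcomp (j : Fin s) (b : Bool) (i : Fin s) : Prop := i = j ∨ (b = true ∧ i = j + 1)

noncomputable def CLchi (j : Fin s) (b : Bool) : Fin s → ℝ :=
  fun i => if CLcomp j b i then 1 else 0

lemma CL_claimA (hbound : ∀ i, 0 ≤ v i ∧ v i ≤ (a i : ℝ))
    (h2l : ∀ i, 2 * l ≤ a i) (i : Fin s)
    (h1 : CLE a l v i) (h2 : CLE a l v (i + 1)) : v (i + 1) = (l : ℝ) := by
  unfold CLE at h1 h2
  have hb1 := (hbound i).2
  have hb2 := (hbound (i + 1 + 1)).1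
  have h2l' : ((2 * l : ℤ) : ℝ) ≤ ((a (i + 1) : ℤ) : ℝ) := by exact_mod_cast h2l (i + 1)
  push_cast at h2l'
  linarith

lemma CLE_ne (hl : 0 ≤ l) (ha : ∀ i, 1 ≤ a i) (h2l : ∀ i, 2 * l ≤ a i)
    (i : Fin s) (hE : CLE a l v i) : i + 1 ≠ i := by
  intro h
  unfold CLE at hE
  rw [h] at hE
  have : (a i : ℝ) = (l : ℝ) := by linarith
  have hal : a i = l := by exact_mod_cast this
  have := h2l i
  have := ha i
  omega

end CLaux
section CLaux2
variable {s : ℕ} [NeZero s] (a : Fin s → ℤ) (l : ℤ) (v : Fin s → ℝ)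

lemma CL_notint_flex (i : Fin s) (hbound : ∀ i, 0 ≤ v i ∧ v i ≤ (a i : ℝ))
    (hi : ∀ m : ℤ, v i ≠ (m : ℝ)) : CLFlex a v i := by
  constructor
  · rcases lt_or_eq_of_le (hbound i).1 with h | h
    · exact h
    · exact absurd h.symm (by simpa using hi 0)
  · rcases lt_or_eq_of_le (hbound i).2 with h | h
    · exact h
    · exact absurd h (hi (a i))

/-- classification of indices with non-integral coordinate -/
lemma CL_classify (hbound : ∀ i, 0 ≤ v i ∧ v i ≤ (a i : ℝ))
    (h2l : ∀ i, 2 * l ≤ a i) (i : Fin s)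
    (hi : ∀ m : ℤ, v i ≠ (m : ℝ)) :
    CLP1 a l v i ∨ CLP2 a l v i ∨ CLP2 a l v (i - 1) := by
  have hflex : CLFlex a v i := CL_notint_flex a v i hbound hi
  have hsub : (i - 1) + 1 = i := sub_add_cancel i 1
  by_cases hE1 : CLE a l v (i - 1) <;> by_cases hE2 : CLE a l v i
  · -- both tight : v i = l, contradiction
    exfalso
    have := CL_claimA a l v hbound h2l (i - 1) hE1 (by rwa [hsub])
    rw [hsub] at this
    exact hi l this
  · -- E (i-1) tight, E i not : pair at i - 1
    right; right
    have hEi1 : CLE a l v (i - 1) := hE1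
    have hv1 : v (i - 1) = v i + ((a (i - 1) : ℝ) - l) := by
      have := hE1; unfold CLE at this; rw [hsub] at this; linarith
    have hnint1 : ∀ m : ℤ, v (i - 1) ≠ (m : ℝ) := by
      intro m hm
      apply hi (m - a (i - 1) + l)
      push_cast
      linarith [hv1, hm]
    refine ⟨CL_notint_flex a v _ hbound hnint1, by rwa [hsub], hE1, ?_, by rwa [hsub]⟩
    -- ¬ CLE (i - 1 - 1)
    intro hE0
    have := CL_claimA a l v hbound h2l (i - 1 - 1) hE0 (by rwa [sub_add_cancel])
    rw [sub_add_cancel] at this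
    apply hi (2 * l - a (i - 1))
    push_cast
    rw [hv1] at this
    linarith
  · -- E i tight, E (i-1) not : pair at i
    right; left
    have hv1 : v (i + 1) = v i - ((a i : ℝ) - l) := by
      have := hE2; unfold CLE at this; linarith
    have hnint1 : ∀ m : ℤ, v (i + 1) ≠ (m : ℝ) := by
      intro m hm
      apply hi (m + a i - l)
      push_cast
      linarith
    refine ⟨hflex, CL_notint_flex a v _ hbound hnint1, hE2, hE1, ?_⟩
    intro hE3
    have := CL_claimA a l v hbound h2l i hE2 hE3
    apply hi (a i)
    linarith
  · exact Or.inl ⟨hflex, hE1, hE2⟩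

/-- overlapping components coincide -/
lemma CL_comp_eq_of_overlap {j k : Fin s} {b c : Bool}
    (hj : CLPC a l v j b) (hk : CLPC a l v k c)
    {x : Fin s} (hxj : CLcomp j b x) (hxk : CLcomp k c x) : j = k ∧ b = c := by
  unfold CLPC at hj hk
  cases b <;> cases c <;> simp only [if_true, if_false, Bool.false_eq_true] at hj hk <;>
    unfold CLcomp at hxj hxk
  · -- both singletons
    simp only [Bool.false_eq_true, false_and, or_false] at hxj hxk
    exact ⟨hxj ▸ hxk ▸ rfl, rfl⟩
  · -- j singleton, k pair
    exfalso
    simp only [Bool.false_eq_true, false_and, or_false, true_and] at hxj hxk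
    rcases hxk with h | h
    · subst h; exact hj.2.2 (hxj ▸ hk.2.2.1)
    · have : x - 1 = k := by rw [h]; exact add_sub_cancel_right k 1
      exact hj.2.1 (hxj ▸ this ▸ hk.2.2.1)
  · -- j pair, k singleton
    exfalso
    simp only [Bool.false_eq_true, false_and, or_false, true_and] at hxj hxk
    rcases hxj with h | h
    · subst h; exact hk.2.2 (hxk ▸ hj.2.2.1)
    · have : x - 1 = j := by rw [h]; exact add_sub_cancel_right j 1
      exact hk.2.1 (hxk ▸ this ▸ hj.2.2.1)
  · -- both pairs
    refine ⟨?_, rfl⟩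
    simp only [true_and] at hxj hxk
    rcases hxj with h1 | h1 <;> rcases hxk with h2 | h2
    · exact h1 ▸ h2
    · -- x = j, x = k + 1 : then E k = E (j - 1) tight contradicts hj
      exfalso
      have hk1 : k = j - 1 := by rw [← h1, h2]; exact (add_sub_cancel_right k 1).symm
      exact hj.2.2.2.1 (hk1 ▸ hk.2.2.1)
    · exfalso
      have hj1 : j = k - 1 := by rw [← h2, h1]; exact (add_sub_cancel_right j 1).symm
      exact hk.2.2.2.1 (hj1 ▸ hj.2.2.1)
    · exact add_right_cancel (h1.symm.trans h2)

end CLaux2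

section CLaux3
variable {s : ℕ} [NeZero s] (a : Fin s → ℤ) (l : ℤ) (v : Fin s → ℝ)

lemma CL_comp_flex {j : Fin s} {b : Bool} (hj : CLPC a l v j b)
    {x : Fin s} (hx : CLcomp j b x) : CLFlex a v x := by
  unfold CLPC at hj
  cases b <;> simp only [if_true, if_false, Bool.false_eq_true] at hj <;>
    unfold CLcomp at hx
  · simp only [Bool.false_eq_true, false_and, or_false] at hx
    exact hx ▸ hj.1
  · simp only [true_and] at hx
    rcases hx with h | h
    · exact h ▸ hj.1
    · exact h ▸ hj.2.1

lemma CL_comp_iff {j : Fin s} {b : Bool} (hj : CLPC a l v j b)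
    {i : Fin s} (hE : CLE a l v i) : CLcomp j b i ↔ CLcomp j b (i + 1) := by
  unfold CLPC at hj
  cases b <;> simp only [if_true, if_false, Bool.false_eq_true] at hj <;>
    unfold CLcomp <;>
    simp only [Bool.false_eq_true, false_and, or_false, true_and]
  · constructor
    · intro h; exact absurd (h ▸ hE) hj.2.2
    · intro h
      have : i = j - 1 := eq_sub_of_add_eq h
      exact absurd (this ▸ hE) hj.2.1
  · constructor
    · rintro (h | h)
      · exact Or.inr (by rw [h])
      · exact absurd (h ▸ hE) hj.2.2.2.2
    · rintro (h | h)
      · have : i = j - 1 := eq_sub_of_add_eq h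
        exact absurd (this ▸ hE) hj.2.2.2.1
      · exact Or.inl (add_right_cancel h)

lemma CL_chi_sum {j : Fin s} {b : Bool} (hne : b = true → j + 1 ≠ j) :
    ∑ i, CLchi j b i = if b then 2 else 1 := by
  cases b
  · simp only [if_false, Bool.false_eq_true]
    have : ∀ i, CLchi j false i = if i = j then (1 : ℝ) else 0 := by
      intro i; unfold CLchi CLcomp; simp
    simp only [this]
    rw [Finset.sum_ite_eq' Finset.univ j (fun _ => (1 : ℝ))]
    simp
  · have hj1 : j + 1 ≠ j := hne rfl
    simp only [if_true]
    have : ∀ i, CLchi j true i =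
        (if i = j then (1 : ℝ) else 0) + (if i = j + 1 then (1 : ℝ) else 0) := by
      intro i; unfold CLchi CLcomp
      by_cases h1 : i = j
      · have h2 : i ≠ j + 1 := fun h => hj1 (h.symm.trans h1)
        rw [if_pos (Or.inl h1), if_pos h1, if_neg h2]; norm_num
      · by_cases h2 : i = j + 1
        · rw [if_pos (Or.inr ⟨rfl, h2⟩), if_neg h1, if_pos h2]; norm_num
        · rw [if_neg (fun h => h.elim h1 (fun hh => h2 hh.2)), if_neg h1, if_neg h2]
          norm_num
    simp only [this]
    rw [Finset.sum_add_distrib,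
      Finset.sum_ite_eq' Finset.univ j (fun _ => (1 : ℝ)),
      Finset.sum_ite_eq' Finset.univ (j + 1) (fun _ => (1 : ℝ))]
    norm_num

lemma CL_no_two_comps
    (hl : 0 ≤ l) (ha : ∀ i, 1 ≤ a i) (h2l : ∀ i, 2 * l ≤ a i)
    (hbound : ∀ i, 0 ≤ v i ∧ v i ≤ (a i : ℝ))
    (hedge : ∀ i, v i - v (i + 1) ≤ (a i : ℝ) - l)
    (t : ℤ) (hsum : ∑ i, v i = (t : ℝ))
    (hext : ∀ w : Fin s → ℝ,
      (v + w) ∈ (chainlink s (fun i => (a i : ℝ)) (l : ℝ) ∩ {x | ∑ i, x i = (t : ℝ)}) →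
      (v - w) ∈ (chainlink s (fun i => (a i : ℝ)) (l : ℝ) ∩ {x | ∑ i, x i = (t : ℝ)}) →
      w = 0)
    {j k : Fin s} {b c : Bool} (hj : CLPC a l v j b) (hk : CLPC a l v k c)
    (hdisj : ∀ x, CLcomp j b x → CLcomp k c x → False) : False := by
  classical
  set n1 : ℝ := if b then 2 else 1 with hn1def
  set n2 : ℝ := if c then 2 else 1 with hn2def
  have hn1 : 1 ≤ n1 := by cases b <;> norm_num [hn1def]
  have hn2 : 1 ≤ n2 := by cases c <;> norm_num [hn2def]
  set w0 : Fin s → ℝ := fun i => CLchi j b i / n1 - CLchi k c i / n2 with hw0def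
  have hchi01 : ∀ (j' : Fin s) (b' : Bool) (x : Fin s),
      CLchi j' b' x = 0 ∨ CLchi j' b' x = 1 := by
    intro j' b' x; unfold CLchi; split <;> simp
  have hchi_comp : ∀ (j' : Fin s) (b' : Bool) (x : Fin s),
      CLchi j' b' x ≠ 0 → CLcomp j' b' x := by
    intro j' b' x hx; unfold CLchi at hx
    by_contra h; simp [h] at hx
  have hterm : ∀ (j' : Fin s) (b' : Bool) (n : ℝ) (x : Fin s), 1 ≤ n →
      0 ≤ CLchi j' b' x / n ∧ CLchi j' b' x / n ≤ 1 := by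
    intro j' b' n x hn
    rcases hchi01 j' b' x with h | h <;> rw [h]
    · constructor <;> simp
    · constructor
      · positivity
      · rw [div_le_one (by linarith)]; linarith
  have hw0_bound : ∀ i, |w0 i| ≤ 1 := by
    intro i
    have h1 := hterm j b n1 i hn1
    have h2 := hterm k c n2 i hn2
    rw [abs_le]; constructor <;> simp only [hw0def] <;> [linarith; linarith]
  have hw0_flex : ∀ i, w0 i ≠ 0 → CLFlex a v i := by
    intro i hi
    by_cases h1 : CLchi j b i = 0
    · by_cases h2 : CLchi k c i = 0
      · exact absurd (by simp [hw0def, h1, h2]) hi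
      · exact CL_comp_flex a l v hk (hchi_comp k c i h2)
    · exact CL_comp_flex a l v hj (hchi_comp j b i h1)
  have hchi_iff : ∀ (j' : Fin s) (b' : Bool), CLPC a l v j' b' → ∀ i, CLE a l v i →
      CLchi j' b' i = CLchi j' b' (i + 1) := by
    intro j' b' hj' i hE
    unfold CLchi
    have := CL_comp_iff a l v hj' (i := i) hE
    by_cases h : CLcomp j' b' i
    · rw [if_pos h, if_pos (this.mp h)]
    · rw [if_neg h, if_neg (fun h' => h (this.mpr h'))]
  have hw0_tight : ∀ i, CLE a l v i → w0 i = w0 (i + 1) := by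
    intro i hE
    simp only [hw0def]
    rw [hchi_iff j b hj i hE, hchi_iff k c hk i hE]
  -- per-index epsilon
  have hQ : ∀ i : Fin s, ∃ ε : ℝ, 0 < ε ∧ ∀ η : ℝ, |η| ≤ ε →
      (0 ≤ v i + η * w0 i ∧ v i + η * w0 i ≤ (a i : ℝ) ∧
        (v i + η * w0 i) - (v (i + 1) + η * w0 (i + 1)) ≤ (a i : ℝ) - l) := by
    intro i
    have hB : ∃ ε1 : ℝ, 0 < ε1 ∧ ∀ η : ℝ, |η| ≤ ε1 →
        0 ≤ v i + η * w0 i ∧ v i + η * w0 i ≤ (a i : ℝ) := by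
      by_cases hz : w0 i = 0
      · exact ⟨1, one_pos, fun η _ => by rw [hz]; simpa using hbound i⟩
      · obtain ⟨h1, h2⟩ := hw0_flex i hz
        refine ⟨min (v i) ((a i : ℝ) - v i), lt_min h1 (by linarith), ?_⟩
        intro η hη
        have h3 : |η * w0 i| ≤ min (v i) ((a i : ℝ) - v i) := by
          rw [abs_mul]
          calc |η| * |w0 i| ≤ |η| * 1 :=
                mul_le_mul_of_nonneg_left (hw0_bound i) (abs_nonneg η)
            _ = |η| := mul_one _
            _ ≤ _ := hη
        have h4 := abs_le.mp h3
        have h5 := min_le_left (v i) ((a i : ℝ) - v i)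
        have h6 := min_le_right (v i) ((a i : ℝ) - v i)
        constructor <;> linarith [h4.1, h4.2]
    have hEd : ∃ ε2 : ℝ, 0 < ε2 ∧ ∀ η : ℝ, |η| ≤ ε2 →
        (v i + η * w0 i) - (v (i + 1) + η * w0 (i + 1)) ≤ (a i : ℝ) - l := by
      by_cases he : w0 i = w0 (i + 1)
      · refine ⟨1, one_pos, fun η _ => ?_⟩
        rw [he]
        have := hedge i
        linarith
      · have hnE : ¬ CLE a l v i := fun hE => he (hw0_tight i hE)
        have hslack : v i - v (i + 1) < (a i : ℝ) - l :=
          lt_of_le_of_ne (hedge i) hnE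
        set σ : ℝ := ((a i : ℝ) - l) - (v i - v (i + 1)) with hσdef
        refine ⟨σ / 2, by simp only [hσdef]; linarith, ?_⟩
        intro η hη
        have h3 : |η * w0 i - η * w0 (i + 1)| ≤ σ := by
          rw [← mul_sub, abs_mul]
          calc |η| * |w0 i - w0 (i + 1)| ≤ (σ / 2) * 2 := by
                apply mul_le_mul hη ?_ (abs_nonneg _) (by simp only [hσdef]; linarith)
                calc |w0 i - w0 (i + 1)| ≤ |w0 i| + |w0 (i + 1)| := abs_sub _ _
                  _ ≤ 2 := by linarith [hw0_bound i, hw0_bound (i + 1)]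
            _ = σ := by ring
        have h4 := (abs_le.mp h3).2
        simp only [hσdef] at h4
        linarith
    obtain ⟨ε1, hε1, hB⟩ := hB
    obtain ⟨ε2, hε2, hEd⟩ := hEd
    refine ⟨min ε1 ε2, lt_min hε1 hε2, fun η hη => ?_⟩
    have hη1 : |η| ≤ ε1 := le_trans hη (min_le_left _ _)
    have hη2 : |η| ≤ ε2 := le_trans hη (min_le_right _ _)
    exact ⟨(hB η hη1).1, (hB η hη1).2, hEd η hη2⟩
  choose εf hεf using hQ
  set ε : ℝ := Finset.univ.inf' Finset.univ_nonempty εf with hεdef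
  have hε : 0 < ε := by
    rw [hεdef, Finset.lt_inf'_iff]
    exact fun i _ => (hεf i).1
  have hεle : ∀ i, ε ≤ εf i := fun i => Finset.inf'_le _ (Finset.mem_univ i)
  -- sum of w0 is zero
  have hjne : b = true → j + 1 ≠ j := by
    intro hb
    have hj' := hj
    unfold CLPC at hj'
    rw [hb, if_pos rfl] at hj'
    exact CLE_ne a l v hl ha h2l j hj'.2.2.1
  have hkne : c = true → k + 1 ≠ k := by
    intro hc
    have hk' := hk
    unfold CLPC at hk'
    rw [hc, if_pos rfl] at hk'
    exact CLE_ne a l v hl ha h2l k hk'.2.2.1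
  have hsumw0 : ∑ i, w0 i = 0 := by
    simp only [hw0def]
    rw [Finset.sum_sub_distrib, ← Finset.sum_div, ← Finset.sum_div,
      CL_chi_sum hjne, CL_chi_sum hkne]
    rw [← hn1def, ← hn2def]
    rw [div_self (by linarith), div_self (by linarith)]
    ring
  -- membership
  have hmem : ∀ η : ℝ, |η| ≤ ε →
      (v + η • w0) ∈ (chainlink s (fun i => (a i : ℝ)) (l : ℝ) ∩ {x | ∑ i, x i = (t : ℝ)}) := by
    intro η hη
    refine ⟨⟨fun i => ?_, fun i => ?_⟩, ?_⟩
    · have h := (hεf i).2 η (le_trans hη (hεle i))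
      simp only [Pi.add_apply, Pi.smul_apply, smul_eq_mul]
      exact ⟨h.1, h.2.1⟩
    · have h := (hεf i).2 η (le_trans hη (hεle i))
      simp only [Pi.add_apply, Pi.smul_apply, smul_eq_mul]
      exact h.2.2
    · show ∑ i, (v + η • w0) i = (t : ℝ)
      simp only [Pi.add_apply, Pi.smul_apply, smul_eq_mul]
      rw [Finset.sum_add_distrib, hsum, ← Finset.mul_sum, hsumw0]
      ring
  have h1 : (v + ε • w0) ∈ _ := hmem ε (by rw [abs_of_pos hε])
  have h2 : (v - ε • w0) ∈ (chainlink s (fun i => (a i : ℝ)) (l : ℝ) ∩ {x | ∑ i, x i = (t : ℝ)}) := by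
    have heq : v - ε • w0 = v + (-ε) • w0 := by
      funext x; simp only [Pi.sub_apply, Pi.add_apply, Pi.smul_apply, smul_eq_mul]; ring
    rw [heq]
    exact hmem (-ε) (by rw [abs_neg, abs_of_pos hε])
  have hzero := hext (ε • w0) h1 h2
  have hw0j : w0 j = 1 / n1 := by
    have hc1 : CLchi j b j = 1 := by
      unfold CLchi
      rw [if_pos (show CLcomp j b j from Or.inl rfl)]
    have hc2 : CLchi k c j = 0 := by
      unfold CLchi
      rw [if_neg (show ¬ CLcomp k c j from fun h => hdisj j (Or.inl rfl) h)]
    simp [hw0def, hc1, hc2]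
  have : ε * w0 j = 0 := by
    have := congrFun hzero j
    simpa using this
  rw [hw0j] at this
  have hn1pos : (0 : ℝ) < 1 / n1 := by positivity
  nlinarith

end CLaux3

/-- every extreme point of an integral section `CL^t(ā,l)` of the chainlink
polytope is half-integral when `2l ≤ aᵢ` for all `i`. -/
theorem chainlink_section_extremePoints_half_integral
    (s : ℕ) [NeZero s] (a : Fin s → ℤ) (ha : ∀ i, 1 ≤ a i)
    (l : ℤ) (hl : 0 ≤ l) (h2l : ∀ i, 2 * l ≤ a i)
    (t : ℤ) (v : Fin s → ℝ)
    (hv : v ∈ Set.extremePoints ℝ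
      (chainlink s (fun i => (a i : ℝ)) (l : ℝ) ∩ {x | ∑ i, x i = (t : ℝ)})) :
    ∀ i, ∃ m : ℤ, 2 * v i = (m : ℝ) := by
  classical
  rw [mem_extremePoints] at hv
  obtain ⟨hvS, hvext⟩ := hv
  have hbound : ∀ i, 0 ≤ v i ∧ v i ≤ (a i : ℝ) := hvS.1.1
  have hedge : ∀ i, v i - v (i + 1) ≤ (a i : ℝ) - (l : ℝ) := hvS.1.2
  have hsum : ∑ i, v i = (t : ℝ) := hvS.2
  have hext : ∀ w : Fin s → ℝ,
      (v + w) ∈ (chainlink s (fun i => (a i : ℝ)) (l : ℝ) ∩ {x | ∑ i, x i = (t : ℝ)}) →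
      (v - w) ∈ (chainlink s (fun i => (a i : ℝ)) (l : ℝ) ∩ {x | ∑ i, x i = (t : ℝ)}) →
      w = 0 := by
    intro w h1 h2
    have hvseg : v ∈ openSegment ℝ (v + w) (v - w) :=
      ⟨1/2, 1/2, by norm_num, by norm_num, by norm_num, by module⟩
    have h3 := (hvext _ h1 _ h2 hvseg).1
    have h4 : v + w = v + 0 := by rw [h3, add_zero]
    exact add_left_cancel h4
  -- build a component for every non-integral coordinate
  have hbuild : ∀ x : Fin s, (∀ m : ℤ, v x ≠ (m : ℝ)) →
      ∃ (j : Fin s) (b : Bool), CLPC a l v j b ∧ CLcomp j b x := by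
    intro x hx
    rcases CL_classify a l v hbound h2l x hx with h | h | h
    · exact ⟨x, false, by simpa [CLPC] using h, Or.inl rfl⟩
    · exact ⟨x, true, by simpa [CLPC] using h, Or.inl rfl⟩
    · exact ⟨x - 1, true, by simpa [CLPC] using h,
        Or.inr ⟨rfl, (sub_add_cancel x 1).symm⟩⟩
  intro i
  by_cases hint : ∃ m : ℤ, v i = (m : ℝ)
  · obtain ⟨m, hm⟩ := hint
    exact ⟨2 * m, by rw [hm]; push_cast; ring⟩
  · push_neg at hint
    obtain ⟨j, b, hPC, hicomp⟩ := hbuild i hint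
    -- all coordinates outside the component are integral
    have hout : ∀ x, ¬ CLcomp j b x → ∃ m : ℤ, v x = (m : ℝ) := by
      intro x hx
      by_contra hnx
      push_neg at hnx
      obtain ⟨j', b', hPC', hxcomp'⟩ := hbuild x hnx
      have hdisj : ∀ y, CLcomp j b y → CLcomp j' b' y → False := by
        intro y h1 h2
        obtain ⟨hje, hbe⟩ := CL_comp_eq_of_overlap a l v hPC hPC' h1 h2
        exact hx (hje ▸ hbe ▸ hxcomp')
      exact CL_no_two_comps a l v hl ha h2l hbound hedge t hsum hext hPC hPC' hdisj
    have hg : ∀ x, ∃ m : ℤ, ¬ CLcomp j b x → v x = (m : ℝ) := by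
      intro x
      by_cases hx : CLcomp j b x
      · exact ⟨0, fun h => absurd hx h⟩
      · obtain ⟨m, hm⟩ := hout x hx
        exact ⟨m, fun _ => hm⟩
    choose g hgs using hg
    -- split the total sum
    have hsplit : ∀ x, v x =
        (if CLcomp j b x then v x else 0) + (if CLcomp j b x then 0 else (g x : ℝ)) := by
      intro x
      by_cases hx : CLcomp j b x
      · rw [if_pos hx, if_pos hx, add_zero]
      · rw [if_neg hx, if_neg hx, zero_add]
        exact hgs x hx
    set Z : ℤ := ∑ x, if CLcomp j b x then 0 else g x with hZdef
    have hZ : ∑ x, (if CLcomp j b x then 0 else (g x : ℝ)) = (Z : ℝ) := by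
      rw [hZdef, Int.cast_sum]
      apply Finset.sum_congr rfl
      intro x _
      rw [apply_ite (fun z : ℤ => (z : ℝ))]
      norm_num
    have htot : (∑ x, if CLcomp j b x then v x else 0) + (Z : ℝ) = (t : ℝ) := by
      rw [← hZ, ← Finset.sum_add_distrib]
      rw [← hsum]
      exact (Finset.sum_congr rfl fun x _ => (hsplit x).symm)
    have hPC' := hPC
    unfold CLPC at hPC'
    cases b
    · -- singleton component : i = j and v j is integral
      rw [if_neg (by simp)] at hPC'
      have hicomp' : i = j := by
        rcases hicomp with h | h
        · exact h
        · exact absurd h.1 (by simp)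
      have hA : (∑ x, if CLcomp j false x then v x else 0) = v j := by
        have : ∀ x, (if CLcomp j false x then v x else 0) = (if x = j then v x else 0) := by
          intro x
          unfold CLcomp
          by_cases hx : x = j
          · rw [if_pos (Or.inl hx), if_pos hx]
          · rw [if_neg (fun h => h.elim hx (fun hh => by simp at hh)), if_neg hx]
        simp only [this]
        rw [Finset.sum_ite_eq' Finset.univ j v, if_pos (Finset.mem_univ j)]
      rw [hA] at htot
      refine ⟨2 * (t - Z), ?_⟩
      rw [hicomp']
      push_cast
      linarith
    · -- pair component : v j + v (j+1) and v j - v (j+1) are integral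
      rw [if_pos rfl] at hPC'
      have hEj : CLE a l v j := hPC'.2.2.1
      have hj1 : j + 1 ≠ j := CLE_ne a l v hl ha h2l j hEj
      have hA : (∑ x, if CLcomp j true x then v x else 0) = v j + v (j + 1) := by
        have : ∀ x, (if CLcomp j true x then v x else 0) =
            (if x = j then v x else 0) + (if x = j + 1 then v x else 0) := by
          intro x
          unfold CLcomp
          by_cases h1 : x = j
          · have h2 : x ≠ j + 1 := fun h => hj1 (h.symm.trans h1)
            rw [if_pos (Or.inl h1), if_pos h1, if_neg h2, add_zero]
          · by_cases h2 : x = j + 1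
            · rw [if_pos (Or.inr ⟨rfl, h2⟩), if_neg h1, if_pos h2, zero_add]
            · rw [if_neg (fun h => h.elim h1 (fun hh => h2 hh.2)), if_neg h1, if_neg h2,
                add_zero]
        simp only [this]
        rw [Finset.sum_add_distrib, Finset.sum_ite_eq' Finset.univ j v,
          Finset.sum_ite_eq' Finset.univ (j + 1) v, if_pos (Finset.mem_univ j),
          if_pos (Finset.mem_univ (j + 1))]
      rw [hA] at htot
      have hEj' : v j - v (j + 1) = (a j : ℝ) - (l : ℝ) := hEj
      rcases hicomp with h | h
      · refine ⟨(t - Z) + (a j - l), ?_⟩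
        rw [h]
        push_cast
        linarith
      · refine ⟨(t - Z) - (a j - l), ?_⟩
        rw [h.2]
        push_cast
        linarith
end

section
/- Let s ≥ 1, let a : Fin s → ℝ with a i > 0 for all i, and let l be a real number with 0 ≤ l and l < a i for all i. Then the chainlink polytope CL(ā,l) ⊆ ℝ^s has nonempty interior (it is full dimensional). -/
/-- the chainlink polytope is full dimensional (has nonempty interior)
when `l < aᵢ` for all `i`. -/
theorem chainlink_interior_nonempty
    (s : ℕ) [NeZero s] (a : Fin s → ℝ) (ha : ∀ i, 0 < a i)
    (l : ℝ) (hl : 0 ≤ l) (hla : ∀ i, l < a i) :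
    (interior (chainlink s a l)).Nonempty := by
  classical
  set U : Set (Fin s → ℝ) :=
    {x | (∀ i, 0 < x i ∧ x i < a i) ∧ ∀ i, x i - x (i + 1) < a i - l} with hUdef
  have hUopen : IsOpen U := by
    have : U = (⋂ i, {x : Fin s → ℝ | 0 < x i}) ∩ (⋂ i, {x : Fin s → ℝ | x i < a i}) ∩
        (⋂ i, {x : Fin s → ℝ | x i - x (i + 1) < a i - l}) := by
      ext x
      simp only [hUdef, Set.mem_setOf_eq, Set.mem_inter_iff, Set.mem_iInter]
      exact ⟨fun ⟨h1,h2⟩ => ⟨⟨fun i => (h1 i).1, fun i => (h1 i).2⟩, h2⟩,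
        fun ⟨⟨h1,h2⟩,h3⟩ => ⟨fun i => ⟨h1 i, h2 i⟩, h3⟩⟩
    rw [this]
    refine ((IsOpen.inter ?_ ?_).inter ?_)
    · exact isOpen_iInter_of_finite fun i => isOpen_lt continuous_const (continuous_apply i)
    · exact isOpen_iInter_of_finite fun i => isOpen_lt (continuous_apply i) continuous_const
    · exact isOpen_iInter_of_finite fun i =>
        isOpen_lt ((continuous_apply i).sub (continuous_apply (i + 1))) continuous_const
  have hUsub : U ⊆ chainlink s a l := by
    intro x hx
    exact ⟨fun i => ⟨(hx.1 i).1.le, (hx.1 i).2.le⟩, fun i => (hx.2 i).le⟩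
  haveI : Nonempty (Fin s) := Fin.pos_iff_nonempty.mp (Nat.pos_of_ne_zero (NeZero.ne s))
  obtain ⟨i₀, -, hmin⟩ := Finset.exists_min_image Finset.univ a Finset.univ_nonempty
  refine ⟨fun _ => a i₀ / 2, ?_⟩
  have hmem : (fun _ => a i₀ / 2) ∈ U := by
    constructor
    · intro i
      constructor
      · linarith [ha i₀]
      · have := hmin i (Finset.mem_univ i)
        linarith [ha i₀]
    · intro i
      simp only [sub_self]
      linarith [hla i]
  exact interior_mono hUsub (hUopen.subset_interior_iff.mpr subset_rfl hmem)
end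

section
/- Let s ≥ 1, let a : Fin s → ℝ with a i > 0 for all i, and let l be a real number with 0 < l and l < a i for all i. Then for every i ∈ Fin s, each of the three sets CL(ā,l) ∩ {x : x_i = 0}, CL(ā,l) ∩ {x : x_i = a_i}, and CL(ā,l) ∩ {x : x_i − x_{i+1 (mod s)} = a_i − l} has affine span of dimension s − 1 (i.e., the finrank of the direction of its affine span is s − 1); hence CL(ā,l) has exactly 3s facets, defined by the equalities x_i = 0, x_i = a_i, and x_i − x_{i+1} = a_i − l. -/
open Module Filter Topology

section

variable {V : Type*} [AddCommGroup V] [Module ℝ V]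

theorem vectorSpan_le_ker_of_subset {S : Set V} {f : V →ₗ[ℝ] ℝ} {c : ℝ}
    (hS : S ⊆ {x | f x = c}) : vectorSpan ℝ S ≤ LinearMap.ker f := by
  rw [vectorSpan_def, Submodule.span_le]
  rintro _ ⟨x, hx, y, hy, rfl⟩
  have hfx : f x = c := hS hx
  have hfy : f y = c := hS hy
  simp [hfx, hfy]

variable [TopologicalSpace V] [IsTopologicalAddGroup V] [ContinuousSMul ℝ V]

theorem ker_le_vectorSpan_of_eventually_mem {S : Set V} {f : V →ₗ[ℝ] ℝ} {c : ℝ} {p : V}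
    (hp : p ∈ S) (hS : S ⊆ {x | f x = c}) (hnhds : ∀ᶠ x in 𝓝 p, f x = c → x ∈ S) :
    LinearMap.ker f ≤ vectorSpan ℝ S := by
  intro v hv
  have hline : Tendsto (fun t : ℝ => p + t • v) (𝓝[≠] 0) (𝓝 p) :=
    ((continuous_const.add (continuous_id.smul continuous_const)).tendsto' 0 p
      (by simp)).mono_left nhdsWithin_le_nhds
  obtain ⟨t, hmem, ht⟩ := ((hline.eventually hnhds).and self_mem_nhdsWithin).exists
  have hfp : f p = c := hS hp
  have hpt : p + t • v ∈ S := hmem (by simp [hfp, LinearMap.mem_ker.1 hv])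
  have htv : t • v ∈ vectorSpan ℝ S := by
    simpa using vsub_mem_vectorSpan ℝ hpt hp
  exact (Submodule.smul_mem_iff _ ht).1 htv

def polyhedron {ι : Type*} (g : ι → V →L[ℝ] ℝ) (b : ι → ℝ) : Set V :=
  {x | ∀ j, g j x ≤ b j}

theorem finrank_direction_affineSpan_polyhedron_inter {ι : Type*} [Finite ι]
    [FiniteDimensional ℝ V] {g : ι → V →L[ℝ] ℝ} {b : ι → ℝ} {m : ι} (hm : g m ≠ 0) {p : V}
    (hpm : g m p = b m) (hp : ∀ j ≠ m, g j p < b j) :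
    finrank ℝ (affineSpan ℝ (polyhedron g b ∩ {x | g m x = b m})).direction
      = finrank ℝ V - 1 := by
  set S := polyhedron g b ∩ {x | g m x = b m}
  have hmem : ∀ x, (∀ j ≠ m, g j x < b j) → g m x = b m → x ∈ S := fun x hx hxm =>
    ⟨fun j => (eq_or_ne j m).elim (fun h => h ▸ hxm.le) fun h => (hx j h).le, hxm⟩
  have hslack : ∀ᶠ x in 𝓝 p, ∀ j ≠ m, g j x < b j := by
    refine eventually_all.2 fun j => ?_
    rcases eq_or_ne j m with rfl | hj
    · exact .of_forall fun _ h => absurd rfl h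
    · exact ((g j).continuous.continuousAt.eventually_lt continuousAt_const (hp j hj)).mono
        fun _ h _ => h
  have hspan : vectorSpan ℝ S = LinearMap.ker (g m : V →ₗ[ℝ] ℝ) :=
    le_antisymm (vectorSpan_le_ker_of_subset Set.inter_subset_right)
      (ker_le_vectorSpan_of_eventually_mem (hmem p hp hpm) Set.inter_subset_right
        (hslack.mono hmem))
  have hm' : (g m : V →ₗ[ℝ] ℝ) ≠ 0 := fun h =>
    hm (ContinuousLinearMap.coe_injective (by simpa using h))
  rw [direction_affineSpan, hspan, ← Module.Dual.finrank_ker_add_one_of_ne_zero hm',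
    Nat.add_sub_cancel]

end

theorem exists_pos_forall_lt {ι : Type*} [Finite ι] {f : ι → ℝ} (hf : ∀ i, 0 < f i) :
    ∃ t, 0 < t ∧ ∀ i, t < f i := by
  cases isEmpty_or_nonempty ι
  · exact ⟨1, one_pos, isEmptyElim⟩
  · obtain ⟨i₀, hi₀⟩ := Finite.exists_min f
    exact ⟨f i₀ / 2, half_pos (hf i₀), fun i => (half_lt_self (hf i₀)).trans_le (hi₀ i)⟩

namespace Chainlink

variable {s : ℕ} [NeZero s] {a : Fin s → ℝ} {l : ℝ}

def constraint (s : ℕ) [NeZero s] : Fin s ⊕ Fin s ⊕ Fin s → (Fin s → ℝ) →L[ℝ] ℝ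
  | .inl k => -coord k
  | .inr (.inl k) => coord k
  | .inr (.inr k) => coord k - coord (k + 1)
where coord (k : Fin s) : (Fin s → ℝ) →L[ℝ] ℝ := ContinuousLinearMap.proj k

def bound (a : Fin s → ℝ) (l : ℝ) : Fin s ⊕ Fin s ⊕ Fin s → ℝ
  | .inl _ => 0
  | .inr (.inl k) => a k
  | .inr (.inr k) => a k - l

@[simp] theorem constraint_inl (k : Fin s) (x : Fin s → ℝ) : constraint s (.inl k) x = -x k := rfl

@[simp] theorem constraint_inr_inl (k : Fin s) (x : Fin s → ℝ) :
    constraint s (.inr (.inl k)) x = x k := rfl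

@[simp] theorem constraint_inr_inr (k : Fin s) (x : Fin s → ℝ) :
    constraint s (.inr (.inr k)) x = x k - x (k + 1) := rfl

theorem chainlink_eq_polyhedron : chainlink s a l = polyhedron (constraint s) (bound a l) := by
  ext x
  simp [chainlink, polyhedron, bound, Sum.forall, forall_and, and_assoc]

theorem finrank_direction_affineSpan_facet {m : Fin s ⊕ Fin s ⊕ Fin s}
    (hm : constraint s m ≠ 0) {p : Fin s → ℝ} (hpm : constraint s m p = bound a l m)
    (hp : ∀ j ≠ m, constraint s j p < bound a l j) :
    finrank ℝ (affineSpan ℝ (chainlink s a l ∩ {x | constraint s m x = bound a l m})).direction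
      = s - 1 := by
  rw [chainlink_eq_polyhedron, finrank_direction_affineSpan_polyhedron_inter hm hpm hp,
    finrank_fin_fun]

omit [NeZero s] in
theorem exists_margin (hl : 0 < l) (hla : ∀ k, l < a k) :
    ∃ t, 0 < t ∧ t < l ∧ ∀ k, t < a k - l := by
  obtain ⟨t, ht, hta⟩ := exists_pos_forall_lt fun k => sub_pos.2 (hla k)
  exact ⟨min t (l / 2), lt_min ht (half_pos hl), (min_le_right _ _).trans_lt (half_lt_self hl),
    fun k => (min_le_left _ _).trans_lt (hta k)⟩

theorem eq_one_of_add_one_eq_self {i : Fin s} (h : i + 1 = i) : s = 1 :=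
  Fin.one_eq_zero_iff.1 (add_eq_left.1 h)

theorem finrank_direction_lower_facet (hl : 0 < l) (hla : ∀ k, l < a k) (i : Fin s) :
    finrank ℝ (affineSpan ℝ (chainlink s a l ∩ {x | x i = 0})).direction = s - 1 := by
  obtain ⟨t, ht, -, hta⟩ := exists_margin hl hla
  set p : Fin s → ℝ := Function.update (fun _ => t) i 0
  have hp : ∀ k, 0 ≤ p k ∧ p k ≤ t := fun k => by
    rcases eq_or_ne k i with rfl | hk <;> simp [p, *, ht.le]
  have hfacet : {x : Fin s → ℝ | x i = 0} =
      {x | constraint s (.inl i) x = bound a l (.inl i)} := by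
    simp [bound]
  rw [hfacet]
  refine finrank_direction_affineSpan_facet (p := p) ?_ (by simp [bound, p]) ?_
  · intro h
    simpa using congr($h (Pi.single i 1))
  · rintro (k | k | k) hk <;>
      simp only [constraint_inl, constraint_inr_inl, constraint_inr_inr, bound]
    · have hki : k ≠ i := fun h => hk (h ▸ rfl)
      simp [p, hki, ht]
    · linarith [hp k, hta k, hl]
    · linarith [hp k, hp (k + 1), hta k]

theorem finrank_direction_upper_facet (hl : 0 < l) (hla : ∀ k, l < a k) (i : Fin s) :
    finrank ℝ (affineSpan ℝ (chainlink s a l ∩ {x | x i = a i})).direction = s - 1 := by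
  obtain ⟨t, ht, -, hta⟩ := exists_margin hl hla
  set p : Fin s → ℝ := Function.update (fun k => a k - t) i (a i)
  have hp : ∀ k, a k - t ≤ p k ∧ p k ≤ a k := fun k => by
    rcases eq_or_ne k i with rfl | hk <;> simp [p, *, ht.le]
  have hfacet : {x : Fin s → ℝ | x i = a i} =
      {x | constraint s (.inr (.inl i)) x = bound a l (.inr (.inl i))} := by
    simp [bound]
  rw [hfacet]
  refine finrank_direction_affineSpan_facet (p := p) ?_ (by simp [bound, p]) ?_
  · intro h
    simpa using congr($h (Pi.single i 1))
  · rintro (k | k | k) hk <;>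
      simp only [constraint_inl, constraint_inr_inl, constraint_inr_inr, bound]
    · linarith [hp k, hta k, hl]
    · have hki : k ≠ i := fun h => hk (h ▸ rfl)
      simp [p, hki, ht]
    · linarith [hp k, hp (k + 1), hta (k + 1)]

theorem finrank_direction_link_facet (hl : 0 < l) (hla : ∀ k, l < a k) (i : Fin s) :
    finrank ℝ (affineSpan ℝ (chainlink s a l ∩ {x | x i - x (i + 1) = a i - l})).direction
      = s - 1 := by
  by_cases hi : i + 1 = i
  · -- `s = 1`: the link inequality degenerates to `0 ≤ aᵢ - l` and the face is empty
    have hempty : chainlink s a l ∩ {x | x i - x (i + 1) = a i - l} = ∅ := by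
      ext x
      simp [hi, (sub_pos.2 (hla i)).ne]
    simp [hempty, eq_one_of_add_one_eq_self hi]
  obtain ⟨t, ht, htl, hta⟩ := exists_margin hl hla
  set p : Fin s → ℝ := Function.update (fun k => a k - t) (i + 1) (l - t)
  have hp : ∀ k, l - t ≤ p k ∧ p k ≤ a k - t := fun k => by
    rcases eq_or_ne k (i + 1) with rfl | hk <;> simp [p, *, (hla _).le]
  have hp_succ : ∀ k ≠ i, p (k + 1) = a (k + 1) - t := fun k hk => by
    simp [p, hk]
  have hfacet : {x : Fin s → ℝ | x i - x (i + 1) = a i - l} =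
      {x | constraint s (.inr (.inr i)) x = bound a l (.inr (.inr i))} := by
    simp [bound]
  rw [hfacet]
  refine finrank_direction_affineSpan_facet (p := p) ?_ (by simp [bound, p, Ne.symm hi]) ?_
  · intro h
    simpa [hi] using congr($h (Pi.single i 1))
  · rintro (k | k | k) hk <;>
      simp only [constraint_inl, constraint_inr_inl, constraint_inr_inr, bound]
    · linarith [hp k]
    · linarith [hp k]
    · have hki : k ≠ i := fun h => hk (h ▸ rfl)
      linarith [hp k, hp_succ k hki, hla (k + 1)]

end Chainlink

theorem chainlink_facets_general
    (s : ℕ) [NeZero s] (a : Fin s → ℝ)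
    (l : ℝ) (hl : 0 < l) (hla : ∀ i, l < a i) (i : Fin s) :
    Module.finrank ℝ
        (affineSpan ℝ (chainlink s a l ∩ {x | x i = 0})).direction = s - 1 ∧
    Module.finrank ℝ
        (affineSpan ℝ (chainlink s a l ∩ {x | x i = a i})).direction = s - 1 ∧
    Module.finrank ℝ
        (affineSpan ℝ (chainlink s a l ∩ {x | x i - x (i + 1) = a i - l})).direction
      = s - 1 :=
  ⟨Chainlink.finrank_direction_lower_facet hl hla i,
    Chainlink.finrank_direction_upper_facet hl hla i,
    Chainlink.finrank_direction_link_facet hl hla i⟩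

/-- when `0 < l < aᵢ` for all `i`, each of the `3s` sets obtained by
intersecting `CL(ā,l)` with one of the defining hyperplanes `xᵢ = 0`, `xᵢ = aᵢ`,
`xᵢ − x_{i+1} = aᵢ − l` has affine span of dimension `s − 1`; hence `CL(ā,l)` has
exactly `3s` facets. -/
theorem chainlink_facets
    (s : ℕ) [NeZero s] (a : Fin s → ℝ) (ha : ∀ i, 0 < a i)
    (l : ℝ) (hl : 0 < l) (hla : ∀ i, l < a i) (i : Fin s) :
    Module.finrank ℝ
        (affineSpan ℝ (chainlink s a l ∩ {x | x i = 0})).direction = s - 1 ∧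
    Module.finrank ℝ
        (affineSpan ℝ (chainlink s a l ∩ {x | x i = a i})).direction = s - 1 ∧
    Module.finrank ℝ
        (affineSpan ℝ (chainlink s a l ∩ {x | x i - x (i + 1) = a i - l})).direction
      = s - 1 :=
  chainlink_facets_general s a l hl hla i
end

section
/- Let s ≥ 1, let a : Fin s → ℝ with a i > 0 for all i, and let l be a real number with 0 ≤ l and 2l ≤ a i for all i. Then every extreme point v of the chainlink polytope CL(ā,l) satisfies v_i ∈ {0, l, a_i − l, a_i} for every i ∈ Fin s. -/
/-!
Let `C` be the set of indices `j` with `v j ∉ {0, l, a j - l, a j}`. A tight cyclic constraint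
`v j - v (j + 1) = a j - l` forces `v j` and `v (j + 1)` to be both in or both out of their
four-element sets, so every constraint that links `C` to its complement is slack, as are the
box constraints on `C`. Hence `v ± t • 𝟙_C` stays in the polytope for small `t`, and
extremality of `v` forces `C = ∅`.
-/

open Filter Topology

section ExtremePoints

variable {E : Type*} [AddCommGroup E] [Module ℝ E] {A : Set E} {v w : E}

theorem eq_zero_of_add_mem_of_sub_mem_of_mem_extremePoints (hv : v ∈ A.extremePoints ℝ)
    (hadd : v + w ∈ A) (hsub : v - w ∈ A) : w = 0 :=
  add_eq_left.1 (hv.2 hadd hsub (mem_openSegment_add_sub v w))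

theorem eq_zero_of_eventually_add_smul_mem_of_mem_extremePoints (hv : v ∈ A.extremePoints ℝ)
    (h : ∀ᶠ t in 𝓝 (0 : ℝ), v + t • w ∈ A) : w = 0 := by
  have hneg : ∀ᶠ t in 𝓝 (0 : ℝ), v + (-t) • w ∈ A :=
    (continuous_neg.tendsto' 0 0 neg_zero).eventually h
  obtain ⟨t, ⟨hadd, hsub⟩, ht⟩ :=
    (((h.and hneg).filter_mono nhdsWithin_le_nhds).and (self_mem_nhdsWithin (s := {0}ᶜ))).exists
  rw [neg_smul, ← sub_eq_add_neg] at hsub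
  exact (smul_eq_zero.1
    (eq_zero_of_add_mem_of_sub_mem_of_mem_extremePoints hv hadd hsub)).resolve_left ht

end ExtremePoints

section AffineInequalities

variable {p q d : ℝ}

theorem eventually_add_mul_le (hpq : p ≤ q) (h : d = 0 ∨ p < q) :
    ∀ᶠ t in 𝓝 (0 : ℝ), p + t * d ≤ q := by
  rcases h with rfl | h
  · simpa using hpq
  · exact (Continuous.tendsto' (by fun_prop) 0 p (by simp)).eventually_le_const h

theorem eventually_le_add_mul (hqp : q ≤ p) (h : d = 0 ∨ q < p) :
    ∀ᶠ t in 𝓝 (0 : ℝ), q ≤ p + t * d := by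
  rcases h with rfl | h
  · simpa using hqp
  · exact (Continuous.tendsto' (by fun_prop) 0 p (by simp)).eventually_const_le h

end AffineInequalities

theorem mem_breakpoints_iff_of_sub_eq {x y a b l : ℝ} (hxa : x ≤ a) (hy0 : 0 ≤ y)
    (ha : 2 * l ≤ a) (hb : 2 * l ≤ b) (h : x - y = a - l) :
    x ∈ ({0, l, a - l, a} : Set ℝ) ↔ y ∈ ({0, l, b - l, b} : Set ℝ) := by
  simp only [Set.mem_insert_iff, Set.mem_singleton_iff]
  constructor
  · rintro (hx | hx | hx | hx)
    · left; linarith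
    · left; linarith
    · left; linarith
    · right; left; linarith
  · rintro (hy | hy | hy | hy)
    · right; right; left; linarith
    · right; right; right; linarith
    · right; right; right; linarith
    · right; right; right; linarith

theorem eventually_add_smul_indicator_mem_chainlink {s : ℕ} [NeZero s] {a : Fin s → ℝ} {l : ℝ}
    {v : Fin s → ℝ} (hv : v ∈ chainlink s a l) {C : Set (Fin s)}
    (hpos : ∀ j ∈ C, 0 < v j) (hlt : ∀ j ∈ C, v j < a j)
    (hslack : ∀ j, (j ∈ C ↔ j + 1 ∈ C) ∨ v j - v (j + 1) < a j - l) :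
    ∀ᶠ t in 𝓝 (0 : ℝ), v + t • C.indicator 1 ∈ chainlink s a l := by
  classical
  simp only [chainlink, Set.mem_ofPred_eq, Pi.add_apply, Pi.smul_apply, smul_eq_mul,
    Set.indicator_apply, Pi.one_apply, eventually_and, eventually_all]
  refine ⟨fun j => ⟨eventually_le_add_mul (hv.1 j).1 ?_, eventually_add_mul_le (hv.1 j).2 ?_⟩,
    fun j => ?_⟩
  · split_ifs with hj
    exacts [Or.inr (hpos j hj), Or.inl rfl]
  · split_ifs with hj
    exacts [Or.inr (hlt j hj), Or.inl rfl]
  · have hd := eventually_add_mul_le (hv.2 j)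
      (d := (if j ∈ C then 1 else 0) - if j + 1 ∈ C then 1 else 0)
      ((hslack j).imp_left fun h => by simp [h])
    filter_upwards [hd] with t ht
    linarith

theorem chainlink_extremePoints_coords_general
    (s : ℕ) [NeZero s] (a : Fin s → ℝ)
    (l : ℝ) (h2l : ∀ i, 2 * l ≤ a i)
    (v : Fin s → ℝ) (hv : v ∈ Set.extremePoints ℝ (chainlink s a l)) :
    ∀ i, v i ∈ ({0, l, a i - l, a i} : Set ℝ) := by
  obtain ⟨hbox, hchain⟩ := hv.1
  set C : Set (Fin s) := {j | v j ∉ ({0, l, a j - l, a j} : Set ℝ)}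
  have hpos : ∀ j ∈ C, 0 < v j := fun j hj =>
    (hbox j).1.lt_of_ne' fun h => hj (by simp [h])
  have hlt : ∀ j ∈ C, v j < a j := fun j hj =>
    (hbox j).2.lt_of_ne fun h => hj (by simp [h])
  have hslack : ∀ j, (j ∈ C ↔ j + 1 ∈ C) ∨ v j - v (j + 1) < a j - l := fun j =>
    (hchain j).lt_or_eq.symm.imp_left fun h => not_congr <|
      mem_breakpoints_iff_of_sub_eq (hbox j).2 (hbox (j + 1)).1 (h2l j) (h2l (j + 1)) h
  have hindicator : C.indicator (1 : Fin s → ℝ) = 0 :=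
    eq_zero_of_eventually_add_smul_mem_of_mem_extremePoints hv
      (eventually_add_smul_indicator_mem_chainlink hv.1 hpos hlt hslack)
  intro i
  by_contra hi
  exact (by simpa using congr_fun hindicator i : i ∉ C) hi

/-- every extreme point `v` of the chainlink polytope has
`vᵢ ∈ {0, l, aᵢ − l, aᵢ}` for each `i`, provided `2l ≤ aᵢ` for all `i`. -/
theorem chainlink_extremePoints_coords
    (s : ℕ) [NeZero s] (a : Fin s → ℝ) (ha : ∀ i, 0 < a i)
    (l : ℝ) (hl : 0 ≤ l) (h2l : ∀ i, 2 * l ≤ a i)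
    (v : Fin s → ℝ) (hv : v ∈ Set.extremePoints ℝ (chainlink s a l)) :
    ∀ i, v i ∈ ({0, l, a i - l, a i} : Set ℝ) :=
  chainlink_extremePoints_coords_general s a l h2l v hv
end

section
/- Let s ≥ 1, let a : Fin s → ℝ with a i > 0 for all i, and let l be a real number with 0 ≤ l and 2l ≤ a i for all i. Then the Lebesgue measure (volume) of the chainlink polytope CL(ā,l) ⊆ ℝ^s equals trace(M_1 · M_2 ··· M_s), where M_i is the 2×2 real matrix [[a_i, −l²/2],[1, 0]]. -/
open MeasureTheory Set Matrix

theorem integral_max_zero {p q : ℝ} (hp : p ≤ 0) (hq : 0 ≤ q) :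
    ∫ x in p..q, max x 0 = q ^ 2 / 2 := by
  have hcont : Continuous fun x : ℝ => max x 0 := by fun_prop
  rw [← intervalIntegral.integral_add_adjacent_intervals (b := 0)
    (hcont.intervalIntegrable _ _) (hcont.intervalIntegrable _ _)]
  have hneg : ∫ x in p..0, max x 0 = 0 := by
    rw [intervalIntegral.integral_congr (g := fun _ => (0 : ℝ)), intervalIntegral.integral_zero]
    intro x hx
    rw [uIcc_of_le hp] at hx
    exact max_eq_right hx.2
  have hpos : ∫ x in (0 : ℝ)..q, max x 0 = ∫ x in (0 : ℝ)..q, x := by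
    refine intervalIntegral.integral_congr fun x hx => ?_
    rw [uIcc_of_le hq] at hx
    exact max_eq_left hx.1
  rw [hneg, hpos, integral_id]
  ring

theorem integral_max_sub_const_zero {p q c : ℝ} (hp : p ≤ c) (hq : c ≤ q) :
    ∫ u in p..q, max (u - c) 0 = (q - c) ^ 2 / 2 := by
  rw [intervalIntegral.integral_comp_sub_right (fun x => max x 0)]
  exact integral_max_zero (by linarith) (by linarith)

theorem integral_max_const_sub_zero {l b : ℝ} (hl : 0 ≤ l) (hb : l ≤ b) :
    ∫ u in (0 : ℝ)..b, max (l - u) 0 = l ^ 2 / 2 := by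
  rw [intervalIntegral.integral_comp_sub_left (fun x => max x 0), sub_zero]
  exact integral_max_zero (by linarith) hl

theorem setLIntegral_Icc_ofReal {f : ℝ → ℝ} {p q : ℝ} (hpq : p ≤ q) (hf : Continuous f)
    (hf₀ : ∀ t ∈ Icc p q, 0 ≤ f t) :
    ∫⁻ t in Icc p q, ENNReal.ofReal (f t) = ENNReal.ofReal (∫ t in p..q, f t) := by
  rw [intervalIntegral.integral_of_le hpq, ← integral_Icc_eq_integral_Ioc,
    ofReal_integral_eq_lintegral_ofReal hf.integrableOn_Icc
      ((ae_restrict_iff' measurableSet_Icc).2 (ae_of_all _ hf₀))]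

theorem setLIntegral_Icc_sub_mul_max_sub_zero {l b α β v : ℝ} (hl : 0 ≤ l) (hb : 2 * l ≤ b)
    (hβ : 0 ≤ β) (hαβ : l * β ≤ α) (hv : v ≤ l) :
    ∫⁻ t in Icc (max v 0) b, ENNReal.ofReal (α - β * max (t - (b - l)) 0)
      = ENNReal.ofReal (b * α - l ^ 2 / 2 * β - α * max v 0) := by
  have hvb : max v 0 ≤ b - l := max_le (by linarith) (by linarith)
  rw [setLIntegral_Icc_ofReal (by linarith) (by fun_prop) fun t ht => ?_]
  · rw [intervalIntegral.integral_sub intervalIntegrable_const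
      ((by fun_prop : Continuous fun t : ℝ => β * max (t - (b - l)) 0).intervalIntegrable _ _),
      intervalIntegral.integral_const, intervalIntegral.integral_const_mul,
      integral_max_sub_const_zero hvb (by linarith), smul_eq_mul]
    congr 1
    ring
  · have : max (t - (b - l)) 0 ≤ l := max_le (by linarith [ht.2]) hl
    nlinarith [mul_le_mul_of_nonneg_left this hβ]

theorem volume_eq_setLIntegral_of_cons_mem_iff {n : ℕ} {S : Set (Fin (n + 1) → ℝ)}
    (hS : MeasurableSet S) {I : Set ℝ} (hI : MeasurableSet I) (T : ℝ → Set (Fin n → ℝ))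
    (h : ∀ t y, Fin.cons t y ∈ S ↔ t ∈ I ∧ y ∈ T t) :
    volume S = ∫⁻ t in I, volume (T t) := by
  have e := (volume_preserving_piFinSuccAbove (fun _ : Fin (n + 1) => ℝ) 0).symm
  rw [← e.measure_preimage hS.nullMeasurableSet, Measure.volume_eq_prod,
    Measure.prod_apply (e.measurable hS), ← lintegral_indicator hI]
  refine lintegral_congr fun t => ?_
  have hslice : Prod.mk t ⁻¹' ((MeasurableEquiv.piFinSuccAbove (fun _ => ℝ) 0).symm ⁻¹' S)
      = {y | t ∈ I ∧ y ∈ T t} := by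
    ext y
    rw [mem_preimage, mem_preimage, MeasurableEquiv.piFinSuccAbove_symm_apply,
      Fin.insertNthEquiv_zero]
    exact h t y
  rw [hslice]
  by_cases ht : t ∈ I <;> simp [ht]

noncomputable section

def transfer (x l : ℝ) : Matrix (Fin 2) (Fin 2) ℝ := !![x, -(l ^ 2) / 2; 1, 0]

/-- The last factor is `transfer (b m) l` with its second column divided by `l ^ 2 / 2`
(see `prod_ofFn_transfer`), so that `chainMatrix l m b *ᵥ ![1, r]` is the pair `(α, β)` of an
open chain whose last link is bounded by `b m - r`. -/
def chainMatrix (l : ℝ) : (m : ℕ) → (Fin (m + 1) → ℝ) → Matrix (Fin 2) (Fin 2) ℝ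
  | 0, b => !![b 0, -1; 1, 0]
  | m + 1, b => transfer (b 0) l * chainMatrix l m (Fin.tail b)

end

theorem transfer_mulVec_zero (x l : ℝ) (w : Fin 2 → ℝ) :
    (transfer x l *ᵥ w) 0 = x * w 0 - l ^ 2 / 2 * w 1 := by
  rw [transfer, mulVec_fin_two]
  simp [neg_div, sub_eq_add_neg]

theorem transfer_mulVec_one (x l : ℝ) (w : Fin 2 → ℝ) : (transfer x l *ᵥ w) 1 = w 0 := by
  rw [transfer, mulVec_fin_two]
  simp

theorem chainMatrix_zero_mulVec (l r : ℝ) (b : Fin 1 → ℝ) :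
    chainMatrix l 0 b *ᵥ ![1, r] = ![b 0 - r, 1] := by
  rw [chainMatrix, mulVec_fin_two]
  simp [sub_eq_add_neg]

theorem prod_ofFn_transfer (l : ℝ) :
    ∀ (m : ℕ) (b : Fin (m + 1) → ℝ), (List.ofFn fun i => transfer (b i) l).prod
      = chainMatrix l m b * !![1, 0; 0, l ^ 2 / 2]
  | 0, b => by
    simp [chainMatrix, transfer, neg_div]
  | m + 1, b => by
    rw [List.ofFn_succ, List.prod_cons, chainMatrix, mul_assoc, ← prod_ofFn_transfer l m]
    rfl

theorem trace_transfer_mul (x l : ℝ) (C : Matrix (Fin 2) (Fin 2) ℝ) :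
    trace (transfer x l * (C * !![1, 0; 0, l ^ 2 / 2]))
      = x * C 0 0 + l ^ 2 / 2 * C 0 1 - l ^ 2 / 2 * C 1 0 := by
  conv_lhs => rw [eta_fin_two C, transfer, mul_fin_two, mul_fin_two, trace_fin_two_of]
  ring

theorem chainMatrix_mulVec_bounds {l r : ℝ} (hl : 0 ≤ l) (hr₀ : 0 ≤ r) (hrl : r ≤ l) :
    ∀ (m : ℕ) (b : Fin (m + 1) → ℝ), (∀ i, 2 * l ≤ b i) →
      0 ≤ (chainMatrix l m b *ᵥ ![1, r]) 1 ∧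
        l * (chainMatrix l m b *ᵥ ![1, r]) 1 ≤ (chainMatrix l m b *ᵥ ![1, r]) 0
  | 0, b, hb => by
    rw [chainMatrix_zero_mulVec]
    refine ⟨zero_le_one, ?_⟩
    show l * 1 ≤ b 0 - r
    linarith [hb 0]
  | m + 1, b, hb => by
    obtain ⟨hβ, hαβ⟩ := chainMatrix_mulVec_bounds hl hr₀ hrl m (Fin.tail b) fun i => hb _
    rw [chainMatrix, ← mulVec_mulVec, transfer_mulVec_zero, transfer_mulVec_one]
    set w := chainMatrix l m (Fin.tail b) *ᵥ ![1, r]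
    have hα : 0 ≤ w 0 := (mul_nonneg hl hβ).trans hαβ
    refine ⟨hα, ?_⟩
    nlinarith [mul_le_mul_of_nonneg_right (hb 0) hα, mul_le_mul_of_nonneg_left hαβ hl]

def openChain (l : ℝ) (m : ℕ) (b : Fin (m + 1) → ℝ) (v r : ℝ) : Set (Fin (m + 1) → ℝ) :=
  {x | (∀ i, 0 ≤ x i ∧ x i ≤ b i) ∧ (∀ i : Fin m, x i.castSucc - x i.succ ≤ b i.castSucc - l) ∧
    v ≤ x 0 ∧ x (Fin.last m) ≤ b (Fin.last m) - r}

section openChain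

variable {l v r t : ℝ} {m : ℕ}

theorem measurableSet_openChain (b : Fin (m + 1) → ℝ) :
    MeasurableSet (openChain l m b v r) := by
  simp only [openChain, ofPred_and, ofPred_forall]
  refine .inter (.iInter fun i => .inter ?_ ?_) (.inter (.iInter fun i => ?_) (.inter ?_ ?_)) <;>
    exact measurableSet_le (by fun_prop) (by fun_prop)

theorem cons_mem_openChain_zero {b : Fin 1 → ℝ} {y : Fin 0 → ℝ} (hr : 0 ≤ r) :
    Fin.cons t y ∈ openChain l 0 b v r ↔ t ∈ Icc (max v 0) (b 0 - r) ∧ y ∈ univ := by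
  simp only [openChain, mem_ofPred_eq, Fin.forall_fin_succ, IsEmpty.forall_iff, Fin.last_zero,
    Fin.cons_zero, mem_Icc, max_le_iff, mem_univ, and_true]
  constructor
  · rintro ⟨⟨h₀, -⟩, -, hv, hr'⟩
    exact ⟨⟨hv, h₀⟩, hr'⟩
  · rintro ⟨⟨hv, h₀⟩, hr'⟩
    exact ⟨⟨h₀, by linarith⟩, trivial, hv, hr'⟩

theorem cons_mem_openChain_succ {b : Fin (m + 2) → ℝ} {y : Fin (m + 1) → ℝ} :
    Fin.cons t y ∈ openChain l (m + 1) b v r ↔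
      t ∈ Icc (max v 0) (b 0) ∧ y ∈ openChain l m (Fin.tail b) (t - (b 0 - l)) r := by
  simp only [openChain, mem_ofPred_eq, Fin.forall_fin_succ, Fin.cons_zero, Fin.cons_succ,
    Fin.castSucc_zero, ← Fin.succ_last, ← Fin.succ_castSucc, Fin.tail, mem_Icc, max_le_iff,
    sub_le_comm (a := t)]
  tauto

theorem volume_openChain (hl : 0 ≤ l) (hr₀ : 0 ≤ r) (hrl : r ≤ l) :
    ∀ (m : ℕ) (b : Fin (m + 1) → ℝ) (v : ℝ), (∀ i, 2 * l ≤ b i) → v ≤ l →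
      volume (openChain l m b v r) = ENNReal.ofReal
        ((chainMatrix l m b *ᵥ ![1, r]) 0 - (chainMatrix l m b *ᵥ ![1, r]) 1 * max v 0)
  | 0, b, v, hb, hv => by
    rw [volume_eq_setLIntegral_of_cons_mem_iff (measurableSet_openChain ..) measurableSet_Icc _
      fun t y => cons_mem_openChain_zero hr₀]
    rw [chainMatrix_zero_mulVec]
    simp [Real.volume_Icc, volume_pi]
  | m + 1, b, v, hb, hv => by
    obtain ⟨hβ, hαβ⟩ := chainMatrix_mulVec_bounds hl hr₀ hrl m (Fin.tail b) fun i => hb _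
    rw [volume_eq_setLIntegral_of_cons_mem_iff (measurableSet_openChain ..) measurableSet_Icc _
      fun t y => cons_mem_openChain_succ,
      setLIntegral_congr_fun measurableSet_Icc fun t ht =>
        volume_openChain hl hr₀ hrl m (Fin.tail b) _ (fun i => hb _) (by linarith [ht.2]),
      setLIntegral_Icc_sub_mul_max_sub_zero hl (hb 0) hβ hαβ hv, chainMatrix, ← mulVec_mulVec,
      transfer_mulVec_zero, transfer_mulVec_one]

end openChain

section chainlink

variable {l t : ℝ} {m : ℕ}

theorem measurableSet_chainlink (s : ℕ) [NeZero s] (a : Fin s → ℝ) (l : ℝ) :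
    MeasurableSet (chainlink s a l) := by
  simp only [chainlink, ofPred_and, ofPred_forall]
  refine .inter (.iInter fun i => .inter ?_ ?_) (.iInter fun i => ?_) <;>
    exact measurableSet_le (by fun_prop) (by fun_prop)

theorem mem_chainlink_iff_mem_openChain {a : Fin (m + 1) → ℝ} {x : Fin (m + 1) → ℝ} :
    x ∈ chainlink (m + 1) a l ↔ x ∈ openChain l m a 0 (max (l - x 0) 0) := by
  simp only [chainlink, openChain, mem_ofPred_eq,
    Fin.forall_fin_succ' (P := fun i => x i - x (i + 1) ≤ a i - l), Fin.coeSucc_eq_succ,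
    Fin.last_add_one]
  constructor
  · rintro ⟨hx, hchain, hlast⟩
    refine ⟨hx, hchain, (hx 0).1, le_sub_comm.1 (max_le ?_ ?_)⟩ <;> linarith [hx (Fin.last m)]
  · rintro ⟨hx, hchain, -, hlast⟩
    exact ⟨hx, hchain, by linarith [le_max_left (l - x 0) 0]⟩

theorem cons_mem_chainlink_one {a : Fin 1 → ℝ} {y : Fin 0 → ℝ} (hl : l ≤ a 0) :
    Fin.cons t y ∈ chainlink 1 a l ↔ t ∈ Icc 0 (a 0) ∧ y ∈ univ := by
  simp [chainlink, Fin.forall_fin_one, hl]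

theorem cons_mem_chainlink_succ {a : Fin (m + 2) → ℝ} {y : Fin (m + 1) → ℝ} :
    Fin.cons t y ∈ chainlink (m + 2) a l ↔
      t ∈ Icc 0 (a 0) ∧ y ∈ openChain l m (Fin.tail a) (t - (a 0 - l)) (max (l - t) 0) := by
  rw [mem_chainlink_iff_mem_openChain, cons_mem_openChain_succ, Fin.cons_zero, max_self]

theorem setLIntegral_Icc_chainMatrix {a : ℝ} (C : Matrix (Fin 2) (Fin 2) ℝ) (hl : 0 ≤ l)
    (ha : 2 * l ≤ a) (hC : ∀ r, 0 ≤ r → r ≤ l →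
      0 ≤ (C *ᵥ ![1, r]) 1 ∧ l * (C *ᵥ ![1, r]) 1 ≤ (C *ᵥ ![1, r]) 0) :
    ∫⁻ t in Icc 0 a, ENNReal.ofReal ((C *ᵥ ![1, max (l - t) 0]) 0
        - (C *ᵥ ![1, max (l - t) 0]) 1 * max (t - (a - l)) 0)
      = ENNReal.ofReal (a * C 0 0 + l ^ 2 / 2 * C 0 1 - l ^ 2 / 2 * C 1 0) := by
  have hval (t : ℝ) : (C *ᵥ ![1, max (l - t) 0]) 0
        - (C *ᵥ ![1, max (l - t) 0]) 1 * max (t - (a - l)) 0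
      = C 0 0 + C 0 1 * max (l - t) 0 - C 1 0 * max (t - (a - l)) 0 := by
    have hdisjoint : max (l - t) 0 * max (t - (a - l)) 0 = 0 := by
      rcases le_total t l with h | h
      · rw [max_eq_right (by linarith : t - (a - l) ≤ 0), mul_zero]
      · rw [max_eq_right (by linarith : l - t ≤ 0), zero_mul]
    simp only [mulVec, dotProduct, Fin.sum_univ_two, cons_val_zero, cons_val_one, mul_one]
    linear_combination (-C 1 1) * hdisjoint
  rw [setLIntegral_Icc_ofReal (by linarith) (by fun_prop) fun t ht => ?_]
  · have hc₁ : Continuous fun t : ℝ => C 0 1 * max (l - t) 0 := by fun_prop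
    have hc₂ : Continuous fun t : ℝ => C 1 0 * max (t - (a - l)) 0 := by fun_prop
    simp_rw [hval]
    rw [intervalIntegral.integral_sub (intervalIntegrable_const.add (hc₁.intervalIntegrable _ _))
        (hc₂.intervalIntegrable _ _),
      intervalIntegral.integral_add intervalIntegrable_const (hc₁.intervalIntegrable _ _),
      intervalIntegral.integral_const, intervalIntegral.integral_const_mul,
      intervalIntegral.integral_const_mul, integral_max_const_sub_zero hl (by linarith),
      integral_max_sub_const_zero (by linarith) (by linarith), smul_eq_mul]
    congr 1
    ring
  · obtain ⟨hβ, hαβ⟩ := hC (max (l - t) 0) (le_max_right _ _) (max_le (by linarith [ht.1]) hl)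
    have : max (t - (a - l)) 0 ≤ l := max_le (by linarith [ht.2]) hl
    nlinarith [mul_le_mul_of_nonneg_left this hβ]

end chainlink

theorem chainlink_volume_general
    (s : ℕ) [NeZero s] (a : Fin s → ℝ)
    (l : ℝ) (hl : 0 ≤ l) (h2l : ∀ i, 2 * l ≤ a i) :
    MeasureTheory.volume (chainlink s a l) =
      ENNReal.ofReal
        (Matrix.trace (List.ofFn fun i : Fin s =>
          (!![a i, -(l ^ 2) / 2; 1, 0] : Matrix (Fin 2) (Fin 2) ℝ)).prod) := by
  obtain ⟨m, rfl⟩ := Nat.exists_eq_add_one_of_ne_zero (NeZero.ne s)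
  change _ = ENNReal.ofReal (trace (List.ofFn fun i => transfer (a i) l).prod)
  rcases m with _ | m
  · rw [volume_eq_setLIntegral_of_cons_mem_iff (measurableSet_chainlink ..) measurableSet_Icc _
      fun t y => cons_mem_chainlink_one (by linarith [h2l 0])]
    simp [transfer, Real.volume_Icc, volume_pi]
  · rw [volume_eq_setLIntegral_of_cons_mem_iff (measurableSet_chainlink ..) measurableSet_Icc _
      fun t y => cons_mem_chainlink_succ,
      setLIntegral_congr_fun measurableSet_Icc fun t ht => volume_openChain hl (le_max_right _ _)
        (max_le (by linarith [ht.1]) hl) m (Fin.tail a) _ (fun i => h2l _) (by linarith [ht.2]),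
      setLIntegral_Icc_chainMatrix _ hl (h2l 0) fun r hr₀ hrl =>
        chainMatrix_mulVec_bounds hl hr₀ hrl m (Fin.tail a) fun i => h2l _,
      List.ofFn_succ, List.prod_cons, prod_ofFn_transfer, trace_transfer_mul]
    rfl

/-- the Lebesgue volume of the chainlink polytope equals
`tr(M₁ ⋯ M_s)` where `Mᵢ = [[aᵢ, −l²/2],[1,0]]`, provided `2l ≤ aᵢ` for all `i`. -/
theorem chainlink_volume
    (s : ℕ) [NeZero s] (a : Fin s → ℝ) (ha : ∀ i, 0 < a i)
    (l : ℝ) (hl : 0 ≤ l) (h2l : ∀ i, 2 * l ≤ a i) :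
    MeasureTheory.volume (chainlink s a l) =
      ENNReal.ofReal
        (Matrix.trace (List.ofFn fun i : Fin s =>
          (!![a i, -(l ^ 2) / 2; 1, 0] : Matrix (Fin 2) (Fin 2) ℝ)).prod) :=
  chainlink_volume_general s a l hl h2l
end
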